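/- arXiv:2502.09881 — 17 statements merged into one kernel-verified Lean document; each statement's English description precedes it below -/
import Mathlib

section
/- In any D-set, if D(a,b;x,y) and D(a,b;y,z) hold, then D(a,b;x,z) holds (transitivity of the D-relation on one side). -/
/-- A D-relation: 4-ary relation satisfying axioms (D1)-(D4). -/
structure IsDRel {α : Type*} (D : α → α → α → α → Prop) : Prop where
  d1 : ∀ w x y z : α, D w x y z → D x w y z ∧ D y z w x
  d2 : ∀ w x y z : α, D w x y z → ¬ D w y x z
  d3 : ∀ w x y z : α, D w x y z → ∀ v, D v x y z ∨ D w x y v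
  d4 : ∀ w x y z : α, w ≠ y → x ≠ y → D w x y y

/-- Transitivity of the D-relation on one side: if D(ab;xy) and D(ab;yz) then D(ab;xz). -/
theorem dset_transitivity {α : Type*} {D : α → α → α → α → Prop} (hD : IsDRel D)
    (a b x y z : α) (h1 : D a b x y) (h2 : D a b y z) : D a b x z := by
  have swap : ∀ w x y z : α, D w x y z → D w x z y := fun w x y z h =>
    (hD.d1 _ _ _ _ ((hD.d1 _ _ _ _ (hD.d1 w x y z h).2).1)).2
  rcases hD.d3 a b x y h1 z with hA | hgoal
  · rcases hD.d3 a b z y (swap _ _ _ _ h2) x with hB | hgoal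
    · exact absurd ((hD.d1 x b z y hB).1) (hD.d2 b z x y (hD.d1 z b x y hA).1)
    · exact swap _ _ _ _ hgoal
  · exact hgoal
end

section
/- On the set of leaves of a tree (a connected acyclic graph), the relation D(a,b;c,d) defined by 'the path from a to b is vertex-disjoint from the path from c to d' satisfies the D-set axioms (D1)-(D4). -/
namespace SimpleGraph

variable {V : Type*} {G : SimpleGraph V}

/-- An inner vertex of a path has two distinct neighbours on it. -/
theorem Walk.IsPath.eq_or_eq_of_existsUnique_adj {u v y : V} {p : G.Walk u v} (hp : p.IsPath)
    (hy : ∃! z, G.Adj y z) (h : y ∈ p.support) : y = u ∨ y = v := by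
  obtain ⟨q, r, rfl⟩ := Walk.mem_support_iff_exists_append.mp h
  by_contra! hne
  have hq : ¬q.Nil := Walk.not_nil_of_ne hne.1.symm
  have hr : ¬r.Nil := Walk.not_nil_of_ne hne.2
  have hsame : q.penultimate = r.snd := hy.unique (Walk.adj_penultimate hq).symm (Walk.adj_snd hr)
  exact hp.ne_of_mem_support_of_append (Walk.adj_snd hr).ne.symm (q.getVert_mem_support _)
    (r.getVert_mem_support _) hsame

namespace IsTree

variable (hT : G.IsTree)

noncomputable def path (a b : V) : G.Walk a b :=
  (hT.existsUnique_path a b).choose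

theorem isPath_path (a b : V) : (hT.path a b).IsPath :=
  (hT.existsUnique_path a b).choose_spec.1

variable {hT}

theorem eq_path {a b : V} {p : G.Walk a b} (hp : p.IsPath) : p = hT.path a b :=
  (hT.existsUnique_path a b).choose_spec.2 p hp

theorem mem_support_path_comm {a b u : V} :
    u ∈ (hT.path a b).support ↔ u ∈ (hT.path b a).support := by
  rw [← eq_path (hT.isPath_path a b).reverse, Walk.support_reverse, List.mem_reverse]

theorem path_append_path {a b u : V} (h : u ∈ (hT.path a b).support) :
    (hT.path a u).append (hT.path u b) = hT.path a b := by
  obtain ⟨q, r, hq, hr, hqr⟩ := (hT.isPath_path a b).mem_support_iff_exists_append.mp h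
  rw [hqr, ← eq_path hq, ← eq_path hr]

theorem support_path_subset_left {a b u : V} (h : u ∈ (hT.path a b).support) :
    (hT.path a u).support ⊆ (hT.path a b).support := by
  rw [← path_append_path h]
  exact Walk.support_subset_support_append_left _ _

theorem support_path_subset_right {a b u : V} (h : u ∈ (hT.path a b).support) :
    (hT.path u b).support ⊆ (hT.path a b).support := by
  rw [← path_append_path h]
  exact Walk.support_subset_support_append_right _ _

theorem mem_path_or_mem_path {a c x : V} (hx : x ∈ (hT.path a c).support) (b : V) :
    x ∈ (hT.path a b).support ∨ x ∈ (hT.path b c).support := by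
  classical
  rw [← eq_path ((hT.path a b).append (hT.path b c)).bypass_isPath] at hx
  exact (Walk.mem_support_append_iff _ _).mp (Walk.support_bypass_subset_support _ hx)

theorem eq_of_mem_path_of_mem_path {m n v : V} (hm : m ∈ (hT.path n v).support)
    (hn : n ∈ (hT.path m v).support) : m = n := by
  by_contra hne
  have hp := hT.isPath_path n v
  rw [← path_append_path hm] at hp
  exact hp.ne_of_mem_support_of_append (Ne.symm hne) (Walk.start_mem_support _) hn rfl

theorem exists_mem_support_mem_path_mem_path {a b : V} {p : G.Walk a b} (hp : p.IsPath) (c : V) :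
    ∃ m ∈ p.support, m ∈ (hT.path b c).support ∧ m ∈ (hT.path a c).support := by
  induction p with
  | nil => exact ⟨_, Walk.start_mem_support _, Walk.start_mem_support _, Walk.start_mem_support _⟩
  | @cons a a' b hadj p ih =>
    obtain ⟨hp, ha⟩ := (Walk.cons_isPath_iff hadj p).mp hp
    by_cases ha' : a ∈ (hT.path a' c).support
    · -- the path from `a'` to `b` is `p`, which avoids `a`
      have hab : a ∈ (hT.path b c).support := by
        refine (mem_path_or_mem_path ha' b).resolve_left ?_
        rwa [← eq_path hp]
      exact ⟨a, Walk.start_mem_support _, hab, Walk.start_mem_support _⟩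
    · obtain ⟨m, hmp, hmb, hma'⟩ := ih hp
      have hpath : Walk.cons hadj (hT.path a' c) = hT.path a c :=
        eq_path ((hT.isPath_path a' c).cons ha')
      refine ⟨m, List.mem_cons_of_mem _ hmp, hmb, ?_⟩
      rw [← hpath, Walk.support_cons]
      exact List.mem_cons_of_mem _ hma'

theorem exists_median (a b c : V) :
    ∃ m, m ∈ (hT.path a b).support ∧ m ∈ (hT.path b c).support ∧ m ∈ (hT.path a c).support :=
  exists_mem_support_mem_path_mem_path (hT.isPath_path a b) c

theorem not_disjoint_path_of_disjoint_path {w x y z : V}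
    (h : (hT.path w x).support.Disjoint (hT.path y z).support) :
    ¬(hT.path w y).support.Disjoint (hT.path x z).support := by
  intro h'
  obtain ⟨m, hwx, hxy, hwy⟩ := exists_median (hT := hT) w x y
  rcases mem_path_or_mem_path hxy z with hxz | hzy
  · exact h' hwy hxz
  · exact h hwx (mem_support_path_comm.mp hzy)

theorem disjoint_path_or_disjoint_path {w x y z : V}
    (h : (hT.path w x).support.Disjoint (hT.path y z).support) (v : V) :
    (hT.path v x).support.Disjoint (hT.path y z).support ∨
      (hT.path w x).support.Disjoint (hT.path y v).support := by
  refine or_iff_not_imp_right.mpr fun hn => ?_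
  obtain ⟨n, hnwx, hnyv⟩ : ∃ n ∈ (hT.path w x).support, n ∈ (hT.path y v).support := by
    simpa [List.disjoint_left] using hn
  intro m hmvx hmyz
  have hmnv : m ∈ (hT.path n v).support := by
    rcases mem_path_or_mem_path hmvx n with hmvn | hmnx
    · exact mem_support_path_comm.mp hmvn
    · exact absurd hmyz (h (support_path_subset_right hnwx hmnx))
  rcases mem_path_or_mem_path hnyv m with hnym | hnmv
  · exact h hnwx (support_path_subset_left hmyz hnym)
  · exact h hnwx (eq_of_mem_path_of_mem_path hmnv hnmv ▸ hmyz)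

theorem forall_isPath_disjoint_iff {a b c d : V} :
    (∀ (p : G.Walk a b) (q : G.Walk c d), p.IsPath → q.IsPath →
        ∀ v : V, v ∈ p.support → v ∉ q.support) ↔
      (hT.path a b).support.Disjoint (hT.path c d).support := by
  refine ⟨fun h => h _ _ (hT.isPath_path a b) (hT.isPath_path c d), fun h p q hp hq => ?_⟩
  rw [eq_path hp, eq_path hq]
  exact h

theorem disjoint_path_self_of_existsUnique_adj {w x y : V} (hy : ∃! z, G.Adj y z) (hw : w ≠ y)
    (hx : x ≠ y) : (hT.path w x).support.Disjoint (hT.path y y).support := by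
  rw [← eq_path (Walk.IsPath.nil : (Walk.nil : G.Walk y y).IsPath)]
  intro v hv hvy
  rw [Walk.support_nil, List.mem_singleton] at hvy
  subst hvy
  rcases (hT.isPath_path w x).eq_or_eq_of_existsUnique_adj hy hv with h | h
  exacts [hw h.symm, hx h.symm]

end IsTree

end SimpleGraph

open SimpleGraph IsTree

/-- On the leaves of a tree, the relation "the path from a to b is vertex-disjoint
from the path from c to d" satisfies the D-set axioms (D1)-(D4). -/
theorem tree_leaves_isDRel {V : Type*} (G : SimpleGraph V) (hT : G.IsTree) :
    IsDRel (fun a b c d : {v : V // ∃! u, G.Adj v u} =>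
      ∀ (p : G.Walk a.1 b.1) (q : G.Walk c.1 d.1), p.IsPath → q.IsPath →
        ∀ v : V, v ∈ p.support → v ∉ q.support) := by
  simp only [forall_isPath_disjoint_iff (hT := hT)]
  refine ⟨fun w x y z h => ⟨fun v hv => h (mem_support_path_comm.mp hv), h.symm⟩,
    fun w x y z => not_disjoint_path_of_disjoint_path,
    fun w x y z h v => disjoint_path_or_disjoint_path h v,
    fun w x y z hwy hxy => disjoint_path_self_of_existsUnique_adj y.2
      (Subtype.coe_ne_coe.mpr hwy) (Subtype.coe_ne_coe.mpr hxy)⟩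
end

section
/- In a D-set, if d ∈ B(a;bc) (i.e., D(bc;ad) holds), then B(a;dc) is a proper subset of B(a;bc), where B(a;xy) = {v ≠ a : D(xy;av)}. -/
/-- If d ∈ B(a;bc), then B(a;dc) ⊊ B(a;bc), where B(a;xy) = {v ≠ a : D(xy;av)}. -/
theorem branch_shrinkage {α : Type*} {D : α → α → α → α → Prop} (hD : IsDRel D)
    (a b c d : α) (hab : a ≠ b) (hac : a ≠ c) (hbc : b ≠ c)
    (hd : d ≠ a ∧ D b c a d) :
    {v : α | v ≠ a ∧ D d c a v} ⊂ {v : α | v ≠ a ∧ D b c a v} := by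
  obtain ⟨hda, hbd⟩ := hd
  rw [Set.ssubset_def]
  refine ⟨?_, ?_⟩
  · rintro v ⟨hva, hv⟩
    refine ⟨hva, ?_⟩
    rcases hD.d3 d c a v hv b with h | h
    · exact h
    · exfalso
      have h1 : D a b d c := (hD.d1 _ _ _ _ h).2
      have h2 : D a d b c := (hD.d1 _ _ _ _ hbd).2
      exact hD.d2 _ _ _ _ h2 h1
  · intro hsub
    obtain ⟨_, hdd⟩ := hsub (⟨hda, hbd⟩ : d ∈ {v : α | v ≠ a ∧ D b c a v})
    have h3 : D a d d c := (hD.d1 _ _ _ _ hdd).2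
    exact hD.d2 _ _ _ _ h3 h3
end

section
/- Let Ω be a D-set with at least 3 elements in which for any three distinct elements there is a splitting separating them, let A ⊆ Ω be finite, and let c ∈ Ω \ A. Then there exists a splitting of Ω with a sector Σ such that c ∈ Σ and A ∩ Σ = ∅. -/
/-- A splitting of a subset `S` of a D-set: a partition of `S` into at least two
nonempty sectors satisfying the two splitting conditions. -/
structure IsSplitting {α : Type*} (D : α → α → α → α → Prop) (S : Set α)
    (P : Set (Set α)) : Prop where
  sector_nonempty : ∀ s ∈ P, s.Nonempty
  sector_subset : ∀ s ∈ P, s ⊆ S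
  cover : ∀ x ∈ S, ∃ s ∈ P, x ∈ s
  pairwise_disjoint : ∀ s ∈ P, ∀ t ∈ P, s ≠ t → Disjoint s t
  two_sectors : ∃ s ∈ P, ∃ t ∈ P, s ≠ t
  cond1 : ∀ s ∈ P, ∀ a ∈ s, ∀ b ∈ s, ∀ c ∈ S \ s, ∀ d ∈ S \ s, D a b c d
  cond2 : ∀ s₁ ∈ P, ∀ s₂ ∈ P, ∀ s₃ ∈ P, ∀ s₄ ∈ P,
    s₁ ≠ s₂ → s₁ ≠ s₃ → s₁ ≠ s₄ → s₂ ≠ s₃ → s₂ ≠ s₄ → s₃ ≠ s₄ →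
    ∀ a ∈ s₁, ∀ b ∈ s₂, ∀ c ∈ s₃, ∀ d ∈ s₄, ¬ D a b c d

/-!
Induction on `A`. Given a sector `s ∋ c` avoiding `A`, a new point `a ∈ s` is removed by
separating `a`, `c` and a point `x ∉ s` by a splitting. The sector `t` of `c` in it cannot
contain `s` (it misses `a`), meets `s` (in `c`) and together with `s` misses `x`; since two
sectors are nested, disjoint or cover `Ω`, this forces `t ⊆ s`, so `t` avoids `A` and `a`.
-/

section

variable {α : Type*} {D : α → α → α → α → Prop}

def SeparatesTriples (D : α → α → α → α → Prop) : Prop :=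
  ∀ x y z : α, x ≠ y → x ≠ z → y ≠ z →
    ∃ P, IsSplitting D Set.univ P ∧ ∃ s₁ ∈ P, ∃ s₂ ∈ P, ∃ s₃ ∈ P,
      s₁ ≠ s₂ ∧ s₁ ≠ s₃ ∧ s₂ ≠ s₃ ∧ x ∈ s₁ ∧ y ∈ s₂ ∧ z ∈ s₃

namespace IsSplitting

variable {S : Set α} {P : Set (Set α)} {s t : Set α}

theorem notMem_of_mem_of_ne (hP : IsSplitting D S P) (hs : s ∈ P) (ht : t ∈ P)
    (hst : s ≠ t) {a : α} (ha : a ∈ s) : a ∉ t :=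
  Set.disjoint_left.mp (hP.pairwise_disjoint s hs t ht hst) ha

theorem exists_mem_diff (hP : IsSplitting D S P) (hs : s ∈ P) : ∃ x ∈ S, x ∉ s := by
  obtain ⟨u, hu, v, hv, huv⟩ := hP.two_sectors
  obtain ⟨t, ht, hts⟩ : ∃ t ∈ P, t ≠ s := by
    by_cases hus : u = s
    · exact ⟨v, hv, fun hvs => huv (hus.trans hvs.symm)⟩
    · exact ⟨u, hu, hus⟩
  obtain ⟨x, hxt⟩ := hP.sector_nonempty t ht
  exact ⟨x, hP.sector_subset t ht hxt, hP.notMem_of_mem_of_ne ht hs hts hxt⟩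

theorem sector_subset_or_disjoint_or_union_eq_univ (hD : IsDRel D)
    {Q : Set (Set α)} (hP : IsSplitting D Set.univ P) (hQ : IsSplitting D Set.univ Q)
    (hs : s ∈ P) (ht : t ∈ Q) :
    s ⊆ t ∨ t ⊆ s ∨ s ∩ t = ∅ ∨ s ∪ t = Set.univ := by
  by_contra! h
  obtain ⟨hst, hts, hmeet, hcover⟩ := h
  obtain ⟨a, has, hat⟩ := Set.not_subset.mp hst
  obtain ⟨b, hbt, hbs⟩ := Set.not_subset.mp hts
  obtain ⟨x, hxs, hxt⟩ := hmeet
  obtain ⟨y, hy⟩ := (Set.ne_univ_iff_exists_notMem _).mp hcover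
  obtain ⟨hys, hyt⟩ := not_or.mp hy
  have hPD : D a x b y := hP.cond1 s hs a has x hxs b ⟨trivial, hbs⟩ y ⟨trivial, hys⟩
  have hQD : D x b a y := hQ.cond1 t ht x hxt b hbt a ⟨trivial, hat⟩ y ⟨trivial, hyt⟩
  exact hD.d2 x b a y hQD (hD.d1 a x b y hPD).1

theorem exists_sector_subset_notMem (hD : IsDRel D) (hsep : SeparatesTriples D)
    (hP : IsSplitting D Set.univ P) (hs : s ∈ P) {a c : α} (hcs : c ∈ s) (hac : a ≠ c) :
    ∃ Q t, IsSplitting D Set.univ Q ∧ t ∈ Q ∧ c ∈ t ∧ t ⊆ s ∧ a ∉ t := by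
  by_cases has : a ∉ s
  · exact ⟨P, s, hP, hs, hcs, subset_rfl, has⟩
  rw [not_not] at has
  obtain ⟨x, -, hxs⟩ := hP.exists_mem_diff hs
  have hax : a ≠ x := fun h => hxs (h ▸ has)
  have hcx : c ≠ x := fun h => hxs (h ▸ hcs)
  obtain ⟨Q, hQ, t₁, ht₁, t, ht, t₃, ht₃, h1t, -, ht3, hat₁, hct, hxt₃⟩ :=
    hsep a c x hac hax hcx
  have hat : a ∉ t := hQ.notMem_of_mem_of_ne ht₁ ht h1t hat₁
  have hxt : x ∉ t := hQ.notMem_of_mem_of_ne ht₃ ht ht3.symm hxt₃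
  refine ⟨Q, t, hQ, ht, hct, ?_, hat⟩
  rcases hP.sector_subset_or_disjoint_or_union_eq_univ hD hQ hs ht with hst | hts | hst | hst
  · exact absurd (hst has) hat
  · exact hts
  · exact absurd hst (Set.nonempty_iff_ne_empty.mp ⟨c, hcs, hct⟩)
  · exact absurd (hst.symm ▸ Set.mem_univ x : x ∈ s ∪ t) (not_or.mpr ⟨hxs, hxt⟩)

end IsSplitting

theorem exists_sector_disjoint_of_finite (hD : IsDRel D) (hsep : SeparatesTriples D)
    {P : Set (Set α)} {s : Set α} (hP : IsSplitting D Set.univ P) (hs : s ∈ P) {c : α}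
    (hcs : c ∈ s) {A : Set α} (hA : A.Finite) (hc : c ∉ A) :
    ∃ Q t, IsSplitting D Set.univ Q ∧ t ∈ Q ∧ c ∈ t ∧ Disjoint A t := by
  induction A, hA using Set.Finite.induction_on with
  | empty => exact ⟨P, s, hP, hs, hcs, Set.empty_disjoint s⟩
  | @insert a A _ _ ih =>
    obtain ⟨hac, hcA⟩ : c ≠ a ∧ c ∉ A := by simpa only [Set.mem_insert_iff, not_or] using hc
    obtain ⟨Q, t, hQ, ht, hct, hAt⟩ := ih hcA
    obtain ⟨R, u, hR, hu, hcu, hut, hau⟩ :=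
      hQ.exists_sector_subset_notMem hD hsep ht hct (Ne.symm hac)
    exact ⟨R, u, hR, hu, hcu,
      Set.disjoint_insert_left.mpr ⟨hau, hAt.mono_right hut⟩⟩

end

/-- In a D-set with at least 3 elements in which any three distinct elements can be
separated by a splitting, every finite set A can be avoided: for c ∉ A there is a
splitting with a sector containing c and disjoint from A. -/
theorem sector_disjoint_from_finite_set {α : Type*} {D : α → α → α → α → Prop}
    (hD : IsDRel D)
    (hcard : ∃ x y z : α, x ≠ y ∧ x ≠ z ∧ y ≠ z)
    (hsep : ∀ x y z : α, x ≠ y → x ≠ z → y ≠ z →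
      ∃ P, IsSplitting D Set.univ P ∧ ∃ s₁ ∈ P, ∃ s₂ ∈ P, ∃ s₃ ∈ P,
        s₁ ≠ s₂ ∧ s₁ ≠ s₃ ∧ s₂ ≠ s₃ ∧ x ∈ s₁ ∧ y ∈ s₂ ∧ z ∈ s₃)
    (A : Set α) (hA : A.Finite) (c : α) (hc : c ∉ A) :
    ∃ P s, IsSplitting D Set.univ P ∧ s ∈ P ∧ c ∈ s ∧ A ∩ s = ∅ := by
  obtain ⟨x, y, z, hxy, hxz, hyz⟩ := hcard
  obtain ⟨P, hP, -⟩ := hsep x y z hxy hxz hyz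
  obtain ⟨s, hs, hcs⟩ := hP.cover c trivial
  obtain ⟨Q, t, hQ, ht, hct, hAt⟩ := exists_sector_disjoint_of_finite hD hsep hP hs hcs hA hc
  exact ⟨Q, t, hQ, ht, hct, Set.disjoint_iff_inter_eq_empty.mp hAt⟩
end

section
/- If C and D are splittings of a D-set Ω such that C is a strict refinement of D, then D has exactly two sectors, C has at least three sectors, and C and D share at least one sector. -/
/-- Two nonempty sets contained in disjoint sets are distinct. -/
lemma ne_of_sub_disjoint {α : Type*} {s s' q q' : Set α}
    (h1 : s ⊆ q) (h2 : s' ⊆ q') (hd : Disjoint q q') (hs : s.Nonempty) : s ≠ s' := by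
  rintro rfl
  obtain ⟨x, hx⟩ := hs
  exact Set.disjoint_left.mp hd (h1 hx) (h2 hx)

/-- If a splitting C strictly refines a splitting D, then D has exactly two sectors,
C has at least three sectors, and C and D share a sector. -/
theorem strict_refinement_structure {α : Type*} {D : α → α → α → α → Prop}
    (hD : IsDRel D) (C Q : Set (Set α))
    (hC : IsSplitting D Set.univ C) (hQ : IsSplitting D Set.univ Q)
    (href : ∀ s ∈ C, ∃ t ∈ Q, s ⊆ t) (hne : C ≠ Q) :
    Q.encard = 2 ∧ 3 ≤ C.encard ∧ ∃ s, s ∈ C ∧ s ∈ Q := by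
  -- any C-sector meeting a Q-sector is contained in it
  have hsub : ∀ s ∈ C, ∀ q ∈ Q, (s ∩ q).Nonempty → s ⊆ q := by
    rintro s hs q hq ⟨x, hxs, hxq⟩
    obtain ⟨q', hq', hsq'⟩ := href s hs
    rcases eq_or_ne q' q with rfl | h
    · exact hsq'
    · exact (Set.disjoint_left.mp (hQ.pairwise_disjoint q' hq' q hq h)
        (hsq' hxs) hxq).elim
  -- Step 1: some Q-sector contains two distinct C-sectors
  have step1 : ∃ t ∈ Q, ∃ s₁ ∈ C, ∃ s₂ ∈ C, s₁ ≠ s₂ ∧ s₁ ⊆ t ∧ s₂ ⊆ t := by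
    by_contra h
    push_neg at h
    apply hne
    have key : ∀ q ∈ Q, q ∈ C ∧ ∀ s ∈ C, s ⊆ q → s = q := by
      intro q hq
      obtain ⟨x, hxq⟩ := hQ.sector_nonempty q hq
      obtain ⟨s, hs, hxs⟩ := hC.cover x trivial
      have hsq : s ⊆ q := hsub s hs q hq ⟨x, hxs, hxq⟩
      have huniq : ∀ s' ∈ C, s' ⊆ q → s' = s := by
        intro s' hs' hs'q
        by_contra hss
        exact h q hq s' hs' s hs hss hs'q hsq
      have hqs : q = s := by
        apply Set.Subset.antisymm _ hsq
        intro y hyq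
        obtain ⟨s', hs', hys'⟩ := hC.cover y trivial
        have : s' = s := huniq s' hs' (hsub s' hs' q hq ⟨y, hys', hyq⟩)
        exact this ▸ hys'
      subst hqs
      exact ⟨hs, huniq⟩
    ext s
    constructor
    · intro hs
      obtain ⟨t, ht, hst⟩ := href s hs
      have := (key t ht).2 s hs hst
      exact this ▸ ht
    · intro hs
      exact (key s hs).1
  obtain ⟨t, ht, s₁, hs₁, s₂, hs₂, h12, h1t, h2t⟩ := step1
  obtain ⟨a, ha⟩ := hC.sector_nonempty s₁ hs₁
  obtain ⟨b, hb⟩ := hC.sector_nonempty s₂ hs₂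
  -- members of sectors disjoint from t are not in t
  have hnotin : ∀ u ∈ Q, u ≠ t → ∀ x ∈ u, x ∈ (Set.univ : Set α) \ t := by
    intro u hu hut x hxu
    exact ⟨trivial, fun hxt =>
      Set.disjoint_left.mp (hQ.pairwise_disjoint u hu t ht hut) hxu hxt⟩
  -- Step 2: at most one Q-sector besides t
  have step2 : ∀ u ∈ Q, ∀ v ∈ Q, u ≠ t → v ≠ t → u = v := by
    intro u hu v hv hut hvt
    by_contra huv
    obtain ⟨c, hc⟩ := hQ.sector_nonempty u hu
    obtain ⟨d, hd⟩ := hQ.sector_nonempty v hv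
    have hDabcd : D a b c d :=
      hQ.cond1 t ht a (h1t ha) b (h2t hb) c (hnotin u hu hut c hc)
        d (hnotin v hv hvt d hd)
    obtain ⟨s₃, hs₃, hcs₃⟩ := hC.cover c trivial
    obtain ⟨s₄, hs₄, hds₄⟩ := hC.cover d trivial
    have h3u : s₃ ⊆ u := hsub s₃ hs₃ u hu ⟨c, hcs₃, hc⟩
    have h4v : s₄ ⊆ v := hsub s₄ hs₄ v hv ⟨d, hds₄, hd⟩
    have dtu : Disjoint t u := hQ.pairwise_disjoint t ht u hu (Ne.symm hut)
    have dtv : Disjoint t v := hQ.pairwise_disjoint t ht v hv (Ne.symm hvt)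
    have duv : Disjoint u v := hQ.pairwise_disjoint u hu v hv huv
    have h13 : s₁ ≠ s₃ := ne_of_sub_disjoint h1t h3u dtu ⟨a, ha⟩
    have h14 : s₁ ≠ s₄ := ne_of_sub_disjoint h1t h4v dtv ⟨a, ha⟩
    have h23 : s₂ ≠ s₃ := ne_of_sub_disjoint h2t h3u dtu ⟨b, hb⟩
    have h24 : s₂ ≠ s₄ := ne_of_sub_disjoint h2t h4v dtv ⟨b, hb⟩
    have h34 : s₃ ≠ s₄ := ne_of_sub_disjoint h3u h4v duv ⟨c, hcs₃⟩
    exact hC.cond2 s₁ hs₁ s₂ hs₂ s₃ hs₃ s₄ hs₄ h12 h13 h14 h23 h24 h34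
      a ha b hb c hcs₃ d hds₄ hDabcd
  -- get the second Q-sector u
  obtain ⟨u, hu, hut⟩ : ∃ u ∈ Q, u ≠ t := by
    obtain ⟨p, hp, q, hq, hpq⟩ := hQ.two_sectors
    rcases eq_or_ne p t with rfl | h
    · exact ⟨q, hq, hpq.symm⟩
    · exact ⟨p, hp, h⟩
  have hQeq : Q = {t, u} := by
    ext v
    constructor
    · intro hv
      rcases eq_or_ne v t with rfl | hvt
      · exact Set.mem_insert _ _
      · exact Set.mem_insert_of_mem _ (step2 v hv u hu hvt hut)
    · rintro (rfl | rfl) <;> assumption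
  -- Step 3: u contains exactly one C-sector
  have step3 : ∀ s₃ ∈ C, ∀ s₄ ∈ C, s₃ ⊆ u → s₄ ⊆ u → s₃ = s₄ := by
    intro s₃ hs₃ s₄ hs₄ h3u h4u
    by_contra h34
    obtain ⟨c, hc⟩ := hC.sector_nonempty s₃ hs₃
    obtain ⟨d, hd⟩ := hC.sector_nonempty s₄ hs₄
    have hDabcd : D a b c d :=
      hQ.cond1 t ht a (h1t ha) b (h2t hb) c (hnotin u hu hut c (h3u hc))
        d (hnotin u hu hut d (h4u hd))
    have dtu : Disjoint t u := hQ.pairwise_disjoint t ht u hu (Ne.symm hut)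
    have h13 : s₁ ≠ s₃ := ne_of_sub_disjoint h1t h3u dtu ⟨a, ha⟩
    have h14 : s₁ ≠ s₄ := ne_of_sub_disjoint h1t h4u dtu ⟨a, ha⟩
    have h23 : s₂ ≠ s₃ := ne_of_sub_disjoint h2t h3u dtu ⟨b, hb⟩
    have h24 : s₂ ≠ s₄ := ne_of_sub_disjoint h2t h4u dtu ⟨b, hb⟩
    exact hC.cond2 s₁ hs₁ s₂ hs₂ s₃ hs₃ s₄ hs₄ h12 h13 h14 h23 h24 h34
      a ha b hb c hc d hd hDabcd
  -- u is itself a C-sector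
  obtain ⟨x, hxu⟩ := hQ.sector_nonempty u hu
  obtain ⟨s₃, hs₃, hxs₃⟩ := hC.cover x trivial
  have h3u : s₃ ⊆ u := hsub s₃ hs₃ u hu ⟨x, hxs₃, hxu⟩
  have hus₃ : u = s₃ := by
    apply Set.Subset.antisymm _ h3u
    intro y hyu
    obtain ⟨s', hs', hys'⟩ := hC.cover y trivial
    have : s' = s₃ := step3 s' hs' s₃ hs₃ (hsub s' hs' u hu ⟨y, hys', hyu⟩) h3u
    exact this ▸ hys'
  have huC : u ∈ C := hus₃ ▸ hs₃
  -- finish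
  refine ⟨?_, ?_, u, huC, hu⟩
  · rw [hQeq, Set.encard_pair (Ne.symm hut)]
  · have dtu : Disjoint t u := hQ.pairwise_disjoint t ht u hu (Ne.symm hut)
    have h1u : s₁ ≠ u := ne_of_sub_disjoint h1t (le_refl u) dtu ⟨a, ha⟩
    have h2u : s₂ ≠ u := ne_of_sub_disjoint h2t (le_refl u) dtu ⟨b, hb⟩
    have hsubset : ({s₁, s₂, u} : Set (Set α)) ⊆ C := by
      rintro v (rfl | rfl | rfl) <;> assumption
    calc (3 : ℕ∞) = ({s₁, s₂, u} : Set (Set α)).encard := by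
          rw [Set.encard_insert_of_notMem (by simp [h12, h1u]),
            Set.encard_pair h2u]
          rfl
      _ ≤ C.encard := Set.encard_mono hsubset
end

section
/- (One Sector Lemma) Let C and D be two distinct splittings of a D-set Ω. Then there is a sector D₀ of D such that every sector of C except exactly one is contained in D₀. -/
/-- One Sector Lemma: for two distinct splittings C and Q of a D-set, there is a
sector D₀ of Q such that every sector of C except exactly one is contained in D₀. -/
theorem one_sector_lemma {α : Type*} {D : α → α → α → α → Prop}
    (hD : IsDRel D) (C Q : Set (Set α))
    (hC : IsSplitting D Set.univ C) (hQ : IsSplitting D Set.univ Q) (hne : C ≠ Q) :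
    ∃ D₀ ∈ Q, ∃ s₀ ∈ C, ¬ s₀ ⊆ D₀ ∧ ∀ s ∈ C, s ≠ s₀ → s ⊆ D₀ := by
  -- two sectors of a splitting sharing a point are equal
  have eqsec : ∀ {P : Set (Set α)}, IsSplitting D Set.univ P →
      ∀ s ∈ P, ∀ t ∈ P, ∀ x, x ∈ s → x ∈ t → s = t := by
    intro P hP s hs t ht x hxs hxt
    by_contra h
    exact Set.disjoint_left.mp (hP.pairwise_disjoint s hs t ht h) hxs hxt
  -- no crossing: a sector of C and a sector of Q cannot cross
  have nocross : ∀ A ∈ C, ∀ P ∈ Q, ∀ a, a ∈ A → a ∈ P → ∀ b, b ∈ A → b ∉ P →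
      ∀ c, c ∉ A → c ∈ P → ∀ d, d ∉ A → d ∉ P → False := by
    intro A hA P hP a haA haP b hbA hbP c hcA hcP d hdA hdP
    have h1 : D a b c d :=
      hC.cond1 A hA a haA b hbA c ⟨trivial, hcA⟩ d ⟨trivial, hdA⟩
    have h2 : D a c b d :=
      hQ.cond1 P hP a haP c hcP b ⟨trivial, hbP⟩ d ⟨trivial, hdP⟩
    exact hD.d2 a b c d h1 h2
  by_cases H : ∃ A ∈ C, ∃ P ∈ Q, ∀ x, x ∉ A → x ∈ P
  · obtain ⟨A, hA, P, hP, hcomp⟩ := H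
    refine ⟨P, hP, A, hA, ?_, ?_⟩
    · intro hAP
      obtain ⟨s, hs, t, ht, hst⟩ := hQ.two_sectors
      have hu : ∃ u ∈ Q, u ≠ P := by
        by_cases h : s = P
        · exact ⟨t, ht, by rw [← h]; exact hst.symm⟩
        · exact ⟨s, hs, h⟩
      obtain ⟨u, hu, huP⟩ := hu
      obtain ⟨y, hy⟩ := hQ.sector_nonempty u hu
      have hyP : y ∈ P := by
        by_cases hyA : y ∈ A
        · exact hAP hyA
        · exact hcomp y hyA
      exact huP (eqsec hQ u hu P hP y hy hyP)
    · intro s hs hsA x hxs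
      apply hcomp
      intro hxA
      exact hsA (eqsec hC s hs A hA x hxs hxA)
  · push_neg at H
    exfalso
    -- trichotomy for pairs of sectors
    have tri : ∀ A ∈ C, ∀ P ∈ Q, A ⊆ P ∨ P ⊆ A ∨ ∀ x ∈ A, x ∉ P := by
      intro A hA P hP
      by_contra h
      push_neg at h
      obtain ⟨h1, h2, x, hxA, hxP⟩ := h
      obtain ⟨b, hbA, hbP⟩ := Set.not_subset.mp h1
      obtain ⟨c, hcP, hcA⟩ := Set.not_subset.mp h2
      obtain ⟨d, hdA, hdP⟩ := H A hA P hP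
      exact nocross A hA P hP x hxA hxP b hbA hbP c hcA hcP d hdA hdP
    by_cases H1 : ∃ A ∈ C, ∃ P ∈ Q, P ⊆ A ∧ P ≠ A
    · -- some sector of Q strictly inside a sector of C
      obtain ⟨A, hA, P, hP, hPA, hne'⟩ := H1
      obtain ⟨p, hp⟩ := hQ.sector_nonempty P hP
      have hpA : p ∈ A := hPA hp
      obtain ⟨b, hbA, hbP⟩ : ∃ b, b ∈ A ∧ b ∉ P := by
        by_contra h
        push_neg at h
        exact hne' (hPA.antisymm h)
      obtain ⟨P'', hP'', hbP''⟩ := hQ.cover b trivial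
      have hP''A : P'' ⊆ A := by
        rcases tri A hA P'' hP'' with h | h | h
        · exact absurd (eqsec hQ P hP P'' hP'' p hp (h hpA)) (fun he => hbP (he ▸ hbP''))
        · exact h
        · exact absurd hbP'' (h b hbA)
      obtain ⟨c, hcA, hcP⟩ := H A hA P hP
      obtain ⟨P₃, hP₃, hcP₃⟩ := hQ.cover c trivial
      have hd3 : ∀ x ∈ A, x ∉ P₃ := by
        rcases tri A hA P₃ hP₃ with h | h | h
        · exact absurd (eqsec hQ P hP P₃ hP₃ p hp (h hpA) ▸ hcP₃) hcP
        · exact absurd (h hcP₃) hcA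
        · exact h
      obtain ⟨e, heA, heP₃⟩ := H A hA P₃ hP₃
      obtain ⟨P₄, hP₄, heP₄⟩ := hQ.cover e trivial
      have hd4 : ∀ x ∈ A, x ∉ P₄ := by
        rcases tri A hA P₄ hP₄ with h | h | h
        · have := eqsec hQ P hP P₄ hP₄ p hp (h hpA)
          exact absurd (hPA.antisymm (this ▸ h)) hne'
        · exact absurd (h heP₄) heA
        · exact h
      have n12 : P ≠ P'' := fun h => hbP (h ▸ hbP'')
      have n13 : P ≠ P₃ := fun h => hd3 p hpA (h ▸ hp)
      have n14 : P ≠ P₄ := fun h => hd4 p hpA (h ▸ hp)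
      have n23 : P'' ≠ P₃ := fun h => hd3 b hbA (h ▸ hbP'')
      have n24 : P'' ≠ P₄ := fun h => hd4 b hbA (h ▸ hbP'')
      have n34 : P₃ ≠ P₄ := fun h => heP₃ (h ▸ heP₄)
      have hnotD : ¬ D p b c e :=
        hQ.cond2 P hP P'' hP'' P₃ hP₃ P₄ hP₄ n12 n13 n14 n23 n24 n34
          p hp b hbP'' c hcP₃ e heP₄
      exact hnotD (hC.cond1 A hA p hpA b hbA c ⟨trivial, hcA⟩ e ⟨trivial, heA⟩)
    · by_cases H2 : ∃ A ∈ C, ∃ P ∈ Q, A ⊆ P ∧ A ≠ P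
      · -- some sector of C strictly inside a sector of Q
        obtain ⟨A, hA, P, hP, hAP, hne'⟩ := H2
        obtain ⟨a, ha⟩ := hC.sector_nonempty A hA
        have haP : a ∈ P := hAP ha
        obtain ⟨b, hbP, hbA⟩ : ∃ b, b ∈ P ∧ b ∉ A := by
          by_contra h
          push_neg at h
          exact hne' (hAP.antisymm h)
        obtain ⟨B'', hB'', hbB''⟩ := hC.cover b trivial
        have hB''P : B'' ⊆ P := by
          rcases tri B'' hB'' P hP with h | h | h
          · exact h
          · exact absurd (eqsec hC A hA B'' hB'' a ha (h haP) ▸ hbB'') hbA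
          · exact absurd hbP (h b hbB'')
        obtain ⟨c, hcA, hcP⟩ := H A hA P hP
        obtain ⟨B₃, hB₃, hcB₃⟩ := hC.cover c trivial
        have hd3 : ∀ x ∈ B₃, x ∉ P := by
          rcases tri B₃ hB₃ P hP with h | h | h
          · exact absurd (h hcB₃) hcP
          · exact absurd (eqsec hC A hA B₃ hB₃ a ha (h haP) ▸ hcB₃) hcA
          · exact h
        obtain ⟨e, heB₃, heP⟩ := H B₃ hB₃ P hP
        obtain ⟨B₄, hB₄, heB₄⟩ := hC.cover e trivial
        have hd4 : ∀ x ∈ B₄, x ∉ P := by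
          rcases tri B₄ hB₄ P hP with h | h | h
          · exact absurd (h heB₄) heP
          · have h4A : B₄ = A := (eqsec hC A hA B₄ hB₄ a ha (h haP)).symm
            exact absurd (hAP.antisymm (h4A ▸ h)) hne'
          · exact h
        have n12 : A ≠ B'' := fun h => hbA (h ▸ hbB'')
        have n13 : A ≠ B₃ := fun h => hd3 a (h ▸ ha) haP
        have n14 : A ≠ B₄ := fun h => hd4 a (h ▸ ha) haP
        have n23 : B'' ≠ B₃ := fun h => hd3 b (h ▸ hbB'') hbP
        have n24 : B'' ≠ B₄ := fun h => hd4 b (h ▸ hbB'') hbP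
        have n34 : B₃ ≠ B₄ := fun h => heB₃ (h ▸ heB₄)
        have hnotD : ¬ D a b c e :=
          hC.cond2 A hA B'' hB'' B₃ hB₃ B₄ hB₄ n12 n13 n14 n23 n24 n34
            a ha b hbB'' c hcB₃ e heB₄
        exact hnotD (hQ.cond1 P hP a haP b hbP c ⟨trivial, hcP⟩ e ⟨trivial, heP⟩)
      · -- otherwise every pair of sectors is equal or disjoint, so C = Q
        push_neg at H1 H2
        have key : ∀ A ∈ C, ∀ P ∈ Q, ∀ x, x ∈ A → x ∈ P → A = P := by
          intro A hA P hP x hxA hxP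
          rcases tri A hA P hP with h | h | h
          · exact H2 A hA P hP h
          · exact (H1 A hA P hP h).symm
          · exact absurd hxP (h x hxA)
        apply hne
        ext A
        constructor
        · intro hA
          obtain ⟨x, hx⟩ := hC.sector_nonempty A hA
          obtain ⟨P, hP, hxP⟩ := hQ.cover x trivial
          exact key A hA P hP x hx hxP ▸ hP
        · intro hA
          obtain ⟨x, hx⟩ := hQ.sector_nonempty A hA
          obtain ⟨B, hB, hxB⟩ := hC.cover x trivial
          exact key B hB A hA x hxB hx ▸ hB
end

section
/- Let A ∪ {e} be a finite D-set with e ∉ A and |A| ≥ 2. Define a binary relation ~ on A by a ~ b iff there exists x ∈ A with D(ab;ex). Then ~ is an equivalence relation on A. -/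
/-- In a finite D-set A ∪ {e}, the relation a ~ b iff ∃ x ∈ A, D(ab;ex) is an
equivalence relation on A. -/
theorem induced_relation_equivalence {α : Type*} [Finite α]
    {D : α → α → α → α → Prop} (hD : IsDRel D)
    (e : α) (A : Set α) (hA : A = {e}ᶜ) (h2 : 2 ≤ A.ncard) :
    (∀ a ∈ A, ∃ x ∈ A, D a a e x) ∧
    (∀ a ∈ A, ∀ b ∈ A, (∃ x ∈ A, D a b e x) → ∃ x ∈ A, D b a e x) ∧
    (∀ a ∈ A, ∀ b ∈ A, ∀ c ∈ A,
      (∃ x ∈ A, D a b e x) → (∃ x ∈ A, D b c e x) → ∃ x ∈ A, D a c e x) := by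
  -- basic moves
  have s1 : ∀ w x y z, D w x y z → D x w y z := fun w x y z h => (hD.d1 w x y z h).1
  have s2 : ∀ w x y z, D w x y z → D y z w x := fun w x y z h => (hD.d1 w x y z h).2
  refine ⟨?_, ?_, ?_⟩
  · -- reflexivity
    intro a ha
    have hae : a ≠ e := by
      rw [hA] at ha; simpa using ha
    obtain ⟨x, hx, hxa⟩ : ∃ x ∈ A, x ≠ a :=
      Set.exists_ne_of_one_lt_ncard (by omega) a
    refine ⟨x, hx, ?_⟩
    exact s2 _ _ _ _ (hD.d4 e x a a (Ne.symm hae) hxa)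
  · -- symmetry
    intro a _ b _ ⟨x, hx, h⟩
    exact ⟨x, hx, s1 _ _ _ _ h⟩
  · -- transitivity
    intro a _ b _ c _ ⟨x, hx, h1⟩ ⟨y, hy, h2'⟩
    -- h1 : D a b e x, h2' : D b c e y
    have hrep : D y e c b := s1 _ _ _ _ (s2 _ _ _ _ (s1 _ _ _ _ h2'))
    rcases hD.d3 y e c b hrep a with h3 | h3
    · -- h3 : D a e c b
      have hrep1 : D x e a b := s1 _ _ _ _ (s2 _ _ _ _ h1)
      rcases hD.d3 x e a b hrep1 c with h4 | h4
      · -- h4 : D c e a b : contradiction with h3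
        exfalso
        have habec : D a b e c :=
          s1 _ _ _ _ (s2 _ _ _ _ (s1 _ _ _ _ (s2 _ _ _ _ (s1 _ _ _ _ (s2 _ _ _ _ h4)))))
        have haebc : D a e b c := s2 _ _ _ _ (s1 _ _ _ _ (s2 _ _ _ _ h3))
        exact hD.d2 a e b c haebc habec
      · -- h4 : D x e a c
        exact ⟨x, hx, s2 _ _ _ _ (s1 _ _ _ _ h4)⟩
    · -- h3 : D y e c a
      exact ⟨y, hy, s1 _ _ _ _ (s2 _ _ _ _ (s1 _ _ _ _ h3))⟩
end

section
/- Let A ∪ {e} be a finite D-set with e ∉ A and |A| ≥ 2. Then there is a unique partition C of A into at least two parts satisfying: (1) if a,b lie in the same part and c lies in a different part, then D(ab;ce); and (2) if a,b lie in different parts, then ¬D(ab;xe) for every x ∈ A. Moreover C is a splitting of A. -/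
/-- The conditions for a partition of A to be "the splitting of A induced by e". -/
def InducedByConds {α : Type*} (D : α → α → α → α → Prop) (A : Set α) (e : α)
    (C : Set (Set α)) : Prop :=
  (∀ s ∈ C, s.Nonempty) ∧ (∀ s ∈ C, s ⊆ A) ∧ (∀ x ∈ A, ∃ s ∈ C, x ∈ s) ∧
  (∀ s ∈ C, ∀ t ∈ C, s ≠ t → Disjoint s t) ∧ (∃ s ∈ C, ∃ t ∈ C, s ≠ t) ∧
  (∀ s ∈ C, ∀ a ∈ s, ∀ b ∈ s, ∀ c ∈ A \ s, D a b c e) ∧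
  (∀ s ∈ C, ∀ t ∈ C, s ≠ t → ∀ a ∈ s, ∀ b ∈ t, ∀ x ∈ A, ¬ D a b x e)

section DRelLemmas

variable {α : Type*} {D : α → α → α → α → Prop}

theorem IsDRel.swapL (hD : IsDRel D) {a b c d : α} (h : D a b c d) : D b a c d :=
  (hD.d1 a b c d h).1

theorem IsDRel.swapP (hD : IsDRel D) {a b c d : α} (h : D a b c d) : D c d a b :=
  (hD.d1 a b c d h).2

theorem IsDRel.swapR (hD : IsDRel D) {a b c d : α} (h : D a b c d) : D a b d c :=
  hD.swapP (hD.swapL (hD.swapP h))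

theorem IsDRel.not13 (hD : IsDRel D) {a b c : α} (h : D a b a c) : False := by
  rcases eq_or_ne b a with rfl | hba
  · exact hD.d2 _ _ _ _ h h
  rcases eq_or_ne c a with rfl | hca
  · have h2 := hD.swapP h
    exact hD.d2 _ _ _ _ h2 h2
  · exact hD.d2 _ _ _ _ h (hD.swapP (hD.d4 b c a a hba hca))

theorem IsDRel.ne13 (hD : IsDRel D) {a b c d : α} (h : D a b c d) : a ≠ c := by
  rintro rfl; exact hD.not13 h

theorem IsDRel.ne23 (hD : IsDRel D) {a b c d : α} (h : D a b c d) : b ≠ c :=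
  hD.ne13 (hD.swapL h)

/-- Transfer of a witness: if `ab|xe` and `ax|ye` then `ab|ye`. -/
theorem IsDRel.desc (hD : IsDRel D) {a b x y e : α}
    (hab : D a b x e) (hax : D a x y e) : D a b y e := by
  by_contra hg
  rcases hD.d3 _ _ _ _ (hD.swapP hab) y with h11 | h11
  · exact hg (hD.swapP h11)
  · exact hD.d2 _ _ _ _ (hD.swapR (hD.swapL hax)) h11

/-- Transitivity lemma: if `ab|xe` and `bc|ye` then `ac|xe` or `ac|ye`. -/
theorem IsDRel.transW (hD : IsDRel D) {a b c x y e : α}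
    (hab : D a b x e) (hbc : D b c y e) : D a c x e ∨ D a c y e := by
  by_contra hg
  push_neg at hg
  obtain ⟨hg1, hg2⟩ := hg
  rcases hD.d3 _ _ _ _ (hD.swapP hab) c with h1 | h1
  · rcases hD.d3 _ _ _ _ (hD.swapR hbc) a with h2 | h2
    · exact hg2 (hD.swapR h2)
    · exact hD.d2 _ _ _ _ (hD.swapR h1) (hD.swapL h2)
  · exact hg1 (hD.swapP h1)

/-- If `ab|xe` and not `bc|xe` then `ab|ce`. -/
theorem IsDRel.sep (hD : IsDRel D) {a b c x e : α}
    (hab : D a b x e) (h : ¬ D b c x e) : D a b c e := by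
  by_contra hg
  rcases hD.d3 _ _ _ _ (hD.swapR hab) c with h8 | h8
  · exact h (hD.swapR (hD.swapL h8))
  · exact hg (hD.swapR h8)

/-- If `ab|ce` and `ab|de` then `ab|cd`. -/
theorem IsDRel.glue (hD : IsDRel D) {a b c d e : α}
    (hc : D a b c e) (hd : D a b d e) : D a b c d := by
  by_contra hg
  rcases hD.d3 _ _ _ _ hc d with h1 | h1
  · rcases hD.d3 _ _ _ _ hd c with h2 | h2
    · exact hD.d2 _ _ _ _ (hD.swapL h1) (hD.swapL h2)
    · exact hg (hD.swapR h2)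
  · exact hg h1

/-- The relation "same sector at `e`". -/
def indRel (D : α → α → α → α → Prop) (e a b : α) : Prop :=
  a = b ∨ ∃ x, x ≠ e ∧ D a b x e

theorem indRel_refl (D : α → α → α → α → Prop) (e a : α) : indRel D e a a :=
  Or.inl rfl

theorem indRel_symm (hD : IsDRel D) {e a b : α} (h : indRel D e a b) : indRel D e b a := by
  rcases h with rfl | ⟨x, hx, hd⟩
  · exact Or.inl rfl
  · exact Or.inr ⟨x, hx, hD.swapL hd⟩

theorem indRel_trans (hD : IsDRel D) {e a b c : α}
    (h1 : indRel D e a b) (h2 : indRel D e b c) : indRel D e a c := by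
  rcases h1 with rfl | ⟨x, hx, hab⟩
  · exact h2
  rcases h2 with rfl | ⟨y, hy, hbc⟩
  · exact Or.inr ⟨x, hx, hab⟩
  rcases hD.transW hab hbc with h | h
  · exact Or.inr ⟨x, hx, h⟩
  · exact Or.inr ⟨y, hy, h⟩

/-- In a finite D-set there exist two unrelated elements besides e. -/
theorem exists_unrelated [Finite α] (hD : IsDRel D) (e : α)
    (h2 : 2 ≤ ({e}ᶜ : Set α).ncard) :
    ∃ a b : α, a ≠ e ∧ b ≠ e ∧ a ≠ b ∧ ¬ indRel D e a b := by
  by_contra hcon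
  push_neg at hcon
  have h1lt : 1 < ({e}ᶜ : Set α).ncard := h2
  obtain ⟨a₀, b₀, ha₀, hb₀, hne⟩ := (Set.one_lt_ncard_iff (Set.toFinite _)).mp h1lt
  have ha₀e : a₀ ≠ e := ha₀
  have hb₀e : b₀ ≠ e := hb₀
  obtain ⟨x₀, hx₀e, hD0⟩ : ∃ x, x ≠ e ∧ D a₀ b₀ x e := by
    rcases hcon a₀ b₀ ha₀e hb₀e hne with h | h
    · exact absurd h hne
    · exact h
  have step : ∀ t : α, t ≠ e → t ≠ a₀ → ∃ y, y ≠ e ∧ D a₀ t y e := by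
    intro t hte hta
    rcases hcon a₀ t ha₀e hte (Ne.symm hta) with h | h
    · exact absurd h.symm hta
    · exact h
  have Fex : ∀ t : {x : α // x ≠ e ∧ x ≠ a₀}, ∃ y : {x : α // x ≠ e ∧ x ≠ a₀},
      D a₀ t.1 y.1 e := by
    rintro ⟨t, hte, hta⟩
    obtain ⟨y, hy, hd⟩ := step t hte hta
    exact ⟨⟨y, hy, Ne.symm (hD.ne13 hd)⟩, hd⟩
  choose F hF using Fex
  set t₀ : {x : α // x ≠ e ∧ x ≠ a₀} := ⟨x₀, hx₀e, Ne.symm (hD.ne13 hD0)⟩ with ht₀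
  set f : ℕ → {x : α // x ≠ e ∧ x ≠ a₀} := fun n => F^[n] t₀ with hf
  have hsucc : ∀ n, D a₀ (f n).1 (f (n+1)).1 e := by
    intro n
    have heq : f (n+1) = F (f n) := Function.iterate_succ_apply' F n t₀
    rw [heq]
    exact hF (f n)
  have hchain : ∀ m n : ℕ, m < n → D a₀ (f m).1 (f n).1 e := by
    intro m n h
    induction n with
    | zero => omega
    | succ k ih =>
      rcases eq_or_lt_of_le (Nat.lt_succ_iff.mp h) with rfl | hlt
      · exact hsucc m
      · exact hD.desc (ih hlt) (hsucc k)
  obtain ⟨m, n, hmn, heq⟩ :=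
    Finite.exists_ne_map_eq_of_infinite (fun n => (f n).1)
  rcases hmn.lt_or_gt with h | h
  · exact hD.ne23 (hchain m n h) heq
  · exact hD.ne23 (hchain n m h) heq.symm

end DRelLemmas

/-- Any partition satisfying the induced conditions is a splitting. -/
theorem conds_isSplitting {α : Type*} {D : α → α → α → α → Prop} (hD : IsDRel D)
    {e : α} {C : Set (Set α)} (h : InducedByConds D ({e}ᶜ) e C) :
    IsSplitting D ({e}ᶜ) C := by
  obtain ⟨h1, hsub, h3, h4, h5, h6, h7⟩ := h
  refine ⟨h1, hsub, h3, h4, h5, ?_, ?_⟩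
  · intro s hs a ha b hb c hc d hd
    have hce : D a b c e := h6 s hs a ha b hb c hc
    have hde : D a b d e := h6 s hs a ha b hb d hd
    exact hD.glue hce hde
  · intro s1 hs1 s2 hs2 s3 hs3 s4 hs4 h12 h13 h14 h23 h24 h34 a ha b hb c hc d hd hDabcd
    rcases hD.d3 a b c d hDabcd e with hcase | hcase
    · have hcd : D c d b e := hD.swapR (hD.swapP hcase)
      exact h7 s3 hs3 s4 hs4 h34 c hc d hd b (hsub s2 hs2 hb) hcd
    · exact h7 s1 hs1 s2 hs2 h12 a ha b hb c (hsub s3 hs3 hc) hcase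

/-- A finite D-set A ∪ {e} induces a unique partition of A into at least two parts
satisfying the two conditions, and this partition is a splitting of A. -/
theorem induced_splitting_exists_unique {α : Type*} [Finite α]
    {D : α → α → α → α → Prop} (hD : IsDRel D)
    (e : α) (A : Set α) (hA : A = {e}ᶜ) (h2 : 2 ≤ A.ncard) :
    (∃! C, InducedByConds D A e C) ∧
    (∀ C, InducedByConds D A e C → IsSplitting D A C) := by
  subst hA
  have hmem : ∀ x : α, x ∈ ({e}ᶜ : Set α) ↔ x ≠ e := fun x => Set.mem_compl_singleton_iff
  set K : α → Set α := fun a => {b | b ≠ e ∧ indRel D e a b} with hK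
  set C : Set (Set α) := {s | ∃ a, a ≠ e ∧ s = K a} with hC
  have hself : ∀ a : α, a ≠ e → a ∈ K a := fun a ha => ⟨ha, indRel_refl D e a⟩
  have hKeq : ∀ a b : α, indRel D e a b → K a = K b := by
    intro a b hab
    ext c
    constructor
    · rintro ⟨hce, hac⟩
      exact ⟨hce, indRel_trans hD (indRel_symm hD hab) hac⟩
    · rintro ⟨hce, hbc⟩
      exact ⟨hce, indRel_trans hD hab hbc⟩
  -- C satisfies the conditions
  have hCconds : InducedByConds D ({e}ᶜ) e C := by
    refine ⟨?_, ?_, ?_, ?_, ?_, ?_, ?_⟩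
    · rintro s ⟨a, hae, rfl⟩
      exact ⟨a, hself a hae⟩
    · rintro s ⟨a, hae, rfl⟩ b hb
      exact (hmem b).mpr hb.1
    · intro x hx
      exact ⟨K x, ⟨x, (hmem x).mp hx, rfl⟩, hself x ((hmem x).mp hx)⟩
    · rintro s ⟨a, hae, rfl⟩ t ⟨b, hbe, rfl⟩ hst
      refine Set.disjoint_left.mpr ?_
      rintro z ⟨hze, haz⟩ ⟨_, hbz⟩
      exact hst (hKeq a b (indRel_trans hD haz (indRel_symm hD hbz)))
    · obtain ⟨a, b, hae, hbe, hab, hnab⟩ := exists_unrelated hD e h2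
      refine ⟨K a, ⟨a, hae, rfl⟩, K b, ⟨b, hbe, rfl⟩, ?_⟩
      intro h
      exact hnab (h ▸ (hself b hbe)).2
    · rintro s ⟨a₀, ha₀e, rfl⟩ a ha b hb c hc
      obtain ⟨hae, hra⟩ := ha
      obtain ⟨hbe, hrb⟩ := hb
      have hce : c ≠ e := (hmem c).mp hc.1
      have hnc : ¬ indRel D e a₀ c := fun h => hc.2 ⟨hce, h⟩
      have hnac : ¬ indRel D e a c := fun h => hnc (indRel_trans hD hra h)
      have hnbc : ¬ indRel D e b c := fun h => hnc (indRel_trans hD hrb h)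
      have hab : indRel D e a b := indRel_trans hD (indRel_symm hD hra) hrb
      rcases hab with rfl | ⟨x, hx, hd⟩
      · have hca : c ≠ a := fun h => hnac (Or.inl h.symm)
        exact hD.swapP (hD.d4 c e a a hca (Ne.symm hae))
      · exact hD.sep hd (fun h => hnbc (Or.inr ⟨x, hx, h⟩))
    · rintro s ⟨a₀, ha₀e, rfl⟩ t ⟨b₀, hb₀e, rfl⟩ hst a ha b hb x hx hd
      have hxe : x ≠ e := (hmem x).mp hx
      have hab : indRel D e a b := Or.inr ⟨x, hxe, hd⟩
      have : indRel D e a₀ b₀ :=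
        indRel_trans hD (indRel_trans hD ha.2 hab) (indRel_symm hD hb.2)
      exact hst (hKeq a₀ b₀ this)
  -- uniqueness
  have huniq : ∀ C', InducedByConds D ({e}ᶜ) e C' → C' = C := by
    intro C' hC'
    obtain ⟨h1', h2', h3', h4', h5', h6', h7'⟩ := hC'
    have hsec : ∀ s ∈ C', ∀ a ∈ s, s = K a := by
      intro s hs a has
      have hae : a ≠ e := (hmem a).mp (h2' s hs has)
      -- there is another sector
      obtain ⟨s₁, hs₁, t₁, ht₁, hst₁⟩ := h5'
      obtain ⟨t, ht, hts⟩ : ∃ t ∈ C', t ≠ s := by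
        rcases eq_or_ne s₁ s with rfl | h
        · exact ⟨t₁, ht₁, fun h => hst₁ h.symm⟩
        · exact ⟨s₁, hs₁, h⟩
      obtain ⟨c, hc⟩ := h1' t ht
      have hcs : c ∉ s := by
        intro hcs
        exact (Set.disjoint_left.mp (h4' t ht s hs hts) hc) hcs
      have hcA : c ∈ ({e}ᶜ : Set α) := h2' t ht hc
      ext b
      constructor
      · intro hbs
        have hbe : b ≠ e := (hmem b).mp (h2' s hs hbs)
        rcases eq_or_ne a b with rfl | hab
        · exact hself a hae
        · have hd : D a b c e := h6' s hs a has b hbs c ⟨hcA, hcs⟩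
          exact ⟨hbe, Or.inr ⟨c, (hmem c).mp hcA, hd⟩⟩
      · rintro ⟨hbe, hrab⟩
        obtain ⟨t', ht', hbt'⟩ := h3' b ((hmem b).mpr hbe)
        rcases eq_or_ne t' s with rfl | hts'
        · exact hbt'
        · rcases hrab with rfl | ⟨x, hx, hd⟩
          · exact has
          · exact absurd hd
              (h7' s hs t' ht' (Ne.symm hts') a has b hbt' x ((hmem x).mpr hx))
    ext s
    constructor
    · intro hs
      obtain ⟨a, has⟩ := h1' s hs
      have hae : a ≠ e := (hmem a).mp (h2' s hs has)
      exact ⟨a, hae, hsec s hs a has⟩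
    · rintro ⟨a, hae, rfl⟩
      obtain ⟨t, ht, hat⟩ := h3' a ((hmem a).mpr hae)
      have := hsec t ht a hat
      rw [← this]
      exact ht
  exact ⟨⟨C, hCconds, huniq⟩, fun C' h => conds_isSplitting hD h⟩
end

section
/- Let A be a finite D-set and C a splitting of A. Then for every sector Σ of C and every a ∈ Σ, there exists b ∈ Σ such that for all c ∈ Σ and d ∉ Σ, ¬D(ab;cd) (such a b is called complementary to a). -/
section Aux

variable {α : Type*} {D : α → α → α → α → Prop}

lemma drel_sw12 (hD : IsDRel D) {w x y z : α} (h : D w x y z) : D x w y z :=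
  (hD.d1 w x y z h).1

lemma drel_swp (hD : IsDRel D) {w x y z : α} (h : D w x y z) : D y z w x :=
  (hD.d1 w x y z h).2

lemma drel_sw34 (hD : IsDRel D) {w x y z : α} (h : D w x y z) : D w x z y :=
  drel_swp hD (drel_sw12 hD (drel_swp hD h))

/-- Replace the outside witness: if `D a b c d` with `b, c ∈ s` and `d, f ∉ s`,
then `D a b c f`. -/
lemma drel_replace_witness (hD : IsDRel D) {C : Set (Set α)}
    (hC : IsSplitting D Set.univ C) {s : Set α} (hs : s ∈ C)
    {a b c d f : α} (hb : b ∈ s) (hc : c ∈ s) (hd : d ∉ s) (hf : f ∉ s)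
    (h : D a b c d) : D a b c f := by
  rcases hD.d3 a b c d h f with h' | h'
  · -- D f b c d, contradiction with cond1 D b c f d
    exfalso
    have hcond : D b c f d :=
      hC.cond1 s hs b hb c hc f ⟨trivial, hf⟩ d ⟨trivial, hd⟩
    exact hD.d2 b c f d hcond (drel_sw12 hD h')
  · exact h'

/-- Transitivity of the "beats" relation. -/
lemma drel_trans (hD : IsDRel D) {C : Set (Set α)}
    (hC : IsSplitting D Set.univ C) {s : Set α} (hs : s ∈ C)
    {a b c e d f : α} (hb : b ∈ s) (hc : c ∈ s) (hd : d ∉ s) (hf : f ∉ s)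
    (h1 : D a b c d) (h2 : D a c e f) : D a b e f := by
  have h1' : D a b c f := drel_replace_witness hD hC hs hb hc hd hf h1
  -- rearrange h2 : D a c e f → D c a f e
  have h2' : D c a f e := drel_sw34 hD (drel_sw12 hD h2)
  rcases hD.d3 c a f e h2' b with h' | h'
  · -- D b a f e → D a b e f
    exact drel_sw34 hD (drel_sw12 hD h')
  · -- D c a f b, contradiction with d2 of h1'
    exfalso
    have : D a c b f := drel_sw34 hD (drel_sw12 hD h')
    exact hD.d2 a b c f h1' this

end Aux

/-- In a finite D-set, for every sector Σ of a splitting and every a ∈ Σ there is a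
complementary element b ∈ Σ: for all c ∈ Σ and d ∉ Σ, ¬D(ab;cd). -/
theorem complementary_element_exists {α : Type*} [Finite α]
    {D : α → α → α → α → Prop} (hD : IsDRel D)
    (C : Set (Set α)) (hC : IsSplitting D Set.univ C)
    (s : Set α) (hs : s ∈ C) (a : α) (ha : a ∈ s) :
    ∃ b ∈ s, ∀ c ∈ s, ∀ d ∉ s, ¬ D a b c d := by
  classical
  -- the set of elements of s that `b` fails against
  set Bad : α → Set α := fun b => {c | c ∈ s ∧ ∃ d, d ∉ s ∧ D a b c d} with hBad
  -- choose b ∈ s minimizing the cardinality of Bad b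
  have hsf : s.Finite := Set.toFinite s
  obtain ⟨b, hbmem, hbmin⟩ :=
    hsf.toFinset.exists_min_image (fun b => (Bad b).ncard) ⟨a, hsf.mem_toFinset.mpr ha⟩
  have hb : b ∈ s := hsf.mem_toFinset.mp hbmem
  refine ⟨b, hb, ?_⟩
  by_contra hcon
  push_neg at hcon
  obtain ⟨c, hc, d, hd, hDabcd⟩ := hcon
  have hcBad : c ∈ Bad b := ⟨hc, d, hd, hDabcd⟩
  -- Bad c ⊆ Bad b
  have hsub : Bad c ⊆ Bad b := by
    intro e he
    obtain ⟨hes, f, hf, hDacef⟩ := he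
    exact ⟨hes, f, hf, drel_trans hD hC hs hb hc hd hf hDabcd hDacef⟩
  -- c ∉ Bad c (irreflexivity)
  have hcnot : c ∉ Bad c := by
    rintro ⟨-, d', -, hD'⟩
    exact hD.d2 a c c d' hD' hD'
  have hssub : Bad c ⊂ Bad b := ⟨hsub, fun h => hcnot (h hcBad)⟩
  have hlt : (Bad c).ncard < (Bad b).ncard :=
    Set.ncard_lt_ncard hssub (Set.toFinite _)
  exact absurd (hbmin c (hsf.mem_toFinset.mpr hc)) (not_le.mpr hlt)
end

section
/- (Sector Indifference Principle) Let Ω be a D-set, A ⊆ Ω, C a splitting of Ω, and let C(A) denote the union of all sectors of C that contain an element of A. Then for any a₁,a₂,a₃ ∈ A and any b, b' ∈ Ω \ C(A), D(b a₁; a₂ a₃) holds if and only if D(b' a₁; a₂ a₃) holds. -/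
lemma sector_indifference_aux {α : Type*} {D : α → α → α → α → Prop}
    (hD : IsDRel D) (A : Set α) (C : Set (Set α))
    (hC : IsSplitting D Set.univ C)
    (b b' : α)
    (hb : b ∉ ⋃₀ {s | s ∈ C ∧ (s ∩ A).Nonempty})
    (hb' : b' ∉ ⋃₀ {s | s ∈ C ∧ (s ∩ A).Nonempty})
    (a₁ a₂ a₃ : α) (h₁ : a₁ ∈ A) (h₂ : a₂ ∈ A)
    (hd : D b a₁ a₂ a₃) : D b' a₁ a₂ a₃ := by
  rcases hD.d3 _ _ _ _ hd b' with h | h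
  · exact h
  exfalso
  -- derive False from D b a₁ a₂ b'
  obtain ⟨s₁, hs₁C, ha₁s₁⟩ := hC.cover a₁ trivial
  obtain ⟨s₂, hs₂C, ha₂s₂⟩ := hC.cover a₂ trivial
  obtain ⟨t, htC, hbt⟩ := hC.cover b trivial
  obtain ⟨t', ht'C, hb't'⟩ := hC.cover b' trivial
  have hbs₁ : b ∉ s₁ := fun hmem => hb ⟨s₁, ⟨hs₁C, ⟨a₁, ha₁s₁, h₁⟩⟩, hmem⟩
  have hbs₂ : b ∉ s₂ := fun hmem => hb ⟨s₂, ⟨hs₂C, ⟨a₂, ha₂s₂, h₂⟩⟩, hmem⟩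
  have hb's₁ : b' ∉ s₁ := fun hmem => hb' ⟨s₁, ⟨hs₁C, ⟨a₁, ha₁s₁, h₁⟩⟩, hmem⟩
  have hb's₂ : b' ∉ s₂ := fun hmem => hb' ⟨s₂, ⟨hs₂C, ⟨a₂, ha₂s₂, h₂⟩⟩, hmem⟩
  have hts₁ : t ≠ s₁ := fun e => hbs₁ (e ▸ hbt)
  have hts₂ : t ≠ s₂ := fun e => hbs₂ (e ▸ hbt)
  have ht's₁ : t' ≠ s₁ := fun e => hb's₁ (e ▸ hb't')
  have ht's₂ : t' ≠ s₂ := fun e => hb's₂ (e ▸ hb't')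
  by_cases hs : s₁ = s₂
  · -- a₁, a₂ in same sector s₁; b, b' outside
    have hc := hC.cond1 s₁ hs₁C a₁ ha₁s₁ a₂ (hs ▸ ha₂s₂) b ⟨trivial, hbs₁⟩ b' ⟨trivial, hb's₁⟩
    -- hc : D a₁ a₂ b b'; d2 gives ¬ D a₁ b a₂ b'
    have hne := hD.d2 _ _ _ _ hc
    -- from h : D b a₁ a₂ b', get D a₁ b a₂ b'
    exact hne ((hD.d1 _ _ _ _ h).1)
  by_cases ht : t = t'
  · -- b, b' in same sector t; a₁, a₂ outside
    have ha₁t : a₁ ∉ t := fun hmem =>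
      (hC.pairwise_disjoint t htC s₁ hs₁C hts₁).le_bot ⟨hmem, ha₁s₁⟩
    have ha₂t : a₂ ∉ t := fun hmem =>
      (hC.pairwise_disjoint t htC s₂ hs₂C hts₂).le_bot ⟨hmem, ha₂s₂⟩
    have hc := hC.cond1 t htC b hbt b' (ht ▸ hb't') a₁ ⟨trivial, ha₁t⟩ a₂ ⟨trivial, ha₂t⟩
    -- hc : D b b' a₁ a₂; d2 gives ¬ D b a₁ b' a₂
    have hne := hD.d2 _ _ _ _ hc
    -- from h : D b a₁ a₂ b', get D b a₁ b' a₂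
    have h2 : D a₂ b' b a₁ := (hD.d1 _ _ _ _ h).2
    have h3 : D b' a₂ b a₁ := (hD.d1 _ _ _ _ h2).1
    exact hne ((hD.d1 _ _ _ _ h3).2)
  · -- four distinct sectors t, s₁, s₂, t'
    exact hC.cond2 t htC s₁ hs₁C s₂ hs₂C t' ht'C hts₁ hts₂ ht hs
      (fun e => ht's₁ e.symm) (fun e => ht's₂ e.symm)
      b hbt a₁ ha₁s₁ a₂ ha₂s₂ b' hb't' h

/-- Sector Indifference Principle: all elements outside the union of the sectors
meeting A have the same quantifier-free type over A. -/
theorem sector_indifference {α : Type*} {D : α → α → α → α → Prop}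
    (hD : IsDRel D) (A : Set α) (C : Set (Set α))
    (hC : IsSplitting D Set.univ C)
    (b b' : α)
    (hb : b ∉ ⋃₀ {s | s ∈ C ∧ (s ∩ A).Nonempty})
    (hb' : b' ∉ ⋃₀ {s | s ∈ C ∧ (s ∩ A).Nonempty})
    (a₁ a₂ a₃ : α) (h₁ : a₁ ∈ A) (h₂ : a₂ ∈ A) (h₃ : a₃ ∈ A) :
    D b a₁ a₂ a₃ ↔ D b' a₁ a₂ a₃ :=
  ⟨sector_indifference_aux hD A C hC b b' hb hb' a₁ a₂ a₃ h₁ h₂,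
   sector_indifference_aux hD A C hC b' b hb' hb a₁ a₂ a₃ h₁ h₂⟩
end

section
/- Let A be a finite D-set with |A| ≥ 2 and let C be a splitting of A. Then the D-relation on A extends to a D-relation on A ∪ {e} (e a new element) such that: D(ab;ce) fails whenever a, b lie in different sectors of C, and when a, b lie in the same sector Σ, D(ab;ce) holds iff D(ab;cx) holds for some (equivalently any) x ∈ A \ Σ; moreover this extension satisfies axioms (D1)-(D4) and e induces the splitting C on A. -/
namespace DSetExtAux

variable {α : Type*} {D : α → α → α → α → Prop} {C : Set (Set α)}

theorem swap1 (hD : IsDRel D) {w x y z : α} (h : D w x y z) : D x w y z :=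
  (hD.d1 _ _ _ _ h).1

theorem swapP (hD : IsDRel D) {w x y z : α} (h : D w x y z) : D y z w x :=
  (hD.d1 _ _ _ _ h).2

theorem swap2 (hD : IsDRel D) {w x y z : α} (h : D w x y z) : D w x z y :=
  swapP hD (swap1 hD (swapP hD h))

theorem excl1 (hD : IsDRel D) {w x y z : α} (h : D w x y z) : ¬ D w y x z :=
  hD.d2 _ _ _ _ h

theorem excl2 (hD : IsDRel D) {w x y z : α} (h : D w x y z) : ¬ D w z y x :=
  fun h' => excl1 hD (swap2 hD h) (swap2 hD h')

theorem sector_unique (hC : IsSplitting D Set.univ C) {s t : Set α} (hs : s ∈ C) (ht : t ∈ C)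
    {a : α} (has : a ∈ s) (hat : a ∈ t) : s = t := by
  by_contra hne
  exact Set.disjoint_left.mp (hC.pairwise_disjoint s hs t ht hne) has hat

theorem compl_ne (hC : IsSplitting D Set.univ C) {s : Set α} (hs : s ∈ C) : ∃ x, x ∉ s := by
  obtain ⟨s₁, hs₁, s₂, hs₂, hne⟩ := hC.two_sectors
  rcases eq_or_ne s s₁ with rfl | h1
  · obtain ⟨x, hx⟩ := hC.sector_nonempty s₂ hs₂
    exact ⟨x, fun hxs => Set.disjoint_left.mp
      (hC.pairwise_disjoint s₂ hs₂ s hs₁ (Ne.symm hne)) hx hxs⟩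
  · obtain ⟨x, hx⟩ := hC.sector_nonempty s₁ hs₁
    exact ⟨x, fun hxs => Set.disjoint_left.mp
      (hC.pairwise_disjoint s₁ hs₁ s hs (Ne.symm h1)) hx hxs⟩

theorem cond1' (hC : IsSplitting D Set.univ C) {s : Set α} {a b c d : α} (hs : s ∈ C)
    (ha : a ∈ s) (hb : b ∈ s) (hc : c ∉ s) (hd : d ∉ s) : D a b c d :=
  hC.cond1 s hs a ha b hb c ⟨trivial, hc⟩ d ⟨trivial, hd⟩

/-- `Ex a b c` encodes `D'(a b ; c e)` for the extension: a,b lie in a common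
sector and `D a b c x` holds for every x outside it. -/
def Ex (D : α → α → α → α → Prop) (C : Set (Set α)) (a b c : α) : Prop :=
  ∃ s ∈ C, a ∈ s ∧ b ∈ s ∧ ∀ x ∉ s, D a b c x

theorem extendL (hD : IsDRel D) (hC : IsSplitting D Set.univ C) {s : Set α} {a b c x y : α}
    (hs : s ∈ C) (ha : a ∈ s) (hb : b ∈ s) (hx : x ∉ s) (hy : y ∉ s)
    (h : D a b c x) : D a b c y := by
  by_cases hc : c ∈ s
  · rcases hD.d3 _ _ _ _ h y with h' | h'
    · exact absurd (swap1 hD h') (excl1 hD (cond1' hC hs hb hc hy hx))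
    · exact h'
  · exact cond1' hC hs ha hb hc hy

theorem Ex_of_witness (hD : IsDRel D) (hC : IsSplitting D Set.univ C) {s : Set α} {a b c x : α}
    (hs : s ∈ C) (ha : a ∈ s) (hb : b ∈ s) (hx : x ∉ s) (h : D a b c x) : Ex D C a b c :=
  ⟨s, hs, ha, hb, fun y hy => extendL hD hC hs ha hb hx hy h⟩

theorem Ex_sym (hD : IsDRel D) {a b c : α} (h : Ex D C a b c) : Ex D C b a c := by
  obtain ⟨s, hs, ha, hb, H⟩ := h
  exact ⟨s, hs, hb, ha, fun x hx => swap1 hD (H x hx)⟩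

theorem Ex_excl1 (hD : IsDRel D) (hC : IsSplitting D Set.univ C) {a b c : α}
    (h : Ex D C a b c) : ¬ Ex D C a c b := by
  rintro ⟨t, ht, hat, hct, H2⟩
  obtain ⟨s, hs, has, hbs, H1⟩ := h
  have hts : t = s := sector_unique hC ht hs hat has
  subst hts
  obtain ⟨x0, hx0⟩ := compl_ne hC hs
  exact excl1 hD (H1 x0 hx0) (H2 x0 hx0)

theorem Ex_excl2 (hD : IsDRel D) (hC : IsSplitting D Set.univ C) {a b c : α}
    (h : Ex D C a b c) : ¬ Ex D C b c a := by
  rintro ⟨t, ht, hbt, hct, H2⟩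
  obtain ⟨s, hs, has, hbs, H1⟩ := h
  have hts : t = s := sector_unique hC ht hs hbt hbs
  subst hts
  obtain ⟨x0, hx0⟩ := compl_ne hC hs
  exact excl2 hD (H1 x0 hx0) (swap2 hD (swapP hD (H2 x0 hx0)))

theorem key_P1 (hD : IsDRel D) (hC : IsSplitting D Set.univ C) {s : Set α} {a b c : α}
    (hs : s ∈ C) (ha : a ∈ s) (hb : b ∈ s) (H : ∀ x ∉ s, D a b c x) (u : α) :
    Ex D C u b c ∨ D a b c u := by
  by_cases hu : u ∈ s
  · obtain ⟨x0, hx0⟩ := compl_ne hC hs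
    rcases hD.d3 _ _ _ _ (H x0 hx0) u with h | h
    · exact Or.inl (Ex_of_witness hD hC hs hu hb hx0 h)
    · exact Or.inr h
  · exact Or.inr (H u hu)

theorem key_P2 (hD : IsDRel D) (hC : IsSplitting D Set.univ C) {s : Set α} {a b c : α}
    (hs : s ∈ C) (ha : a ∈ s) (hb : b ∈ s) (H : ∀ x ∉ s, D a b c x) (u : α) :
    Ex D C u b c ∨ Ex D C a b u := by
  by_cases hu : u ∈ s
  · obtain ⟨x0, hx0⟩ := compl_ne hC hs
    rcases hD.d3 _ _ _ _ (swap2 hD (H x0 hx0)) u with h | h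
    · exact Or.inl (Ex_of_witness hD hC hs hu hb hx0 (swap2 hD h))
    · exact Or.inr (Ex_of_witness hD hC hs ha hb hx0 (swap2 hD h))
  · exact Or.inr ⟨s, hs, ha, hb, fun x hx => cond1' hC hs ha hb hu hx⟩

theorem key_P4 (hD : IsDRel D) (hC : IsSplitting D Set.univ C) {t : Set α} {a c d : α}
    (ht : t ∈ C) (hc : c ∈ t) (hd : d ∈ t) (H : ∀ x ∉ t, D c d a x) (u : α) :
    Ex D C c d u ∨ Ex D C c u a := by
  by_cases hu : u ∈ t
  · by_cases haT : a ∈ t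
    · obtain ⟨x0, hx0⟩ := compl_ne hC ht
      have H0 : D c d a x0 := H x0 hx0
      rcases hD.d3 _ _ _ _ (swap1 hD H0) u with h | hB
      · exact Or.inr (Ex_of_witness hD hC ht hc hu hx0 (swap1 hD h))
      · have hB' : D c d u a := swap2 hD (swap1 hD hB)
        rcases hD.d3 _ _ _ _ hB' x0 with hB1 | h
        · rcases hD.d3 _ _ _ _ (swap2 hD H0) u with h2 | h2
          · exact absurd (swapP hD h2) (excl2 hD hB1)
          · exact Or.inl (Ex_of_witness hD hC ht hc hd hx0 (swap2 hD h2))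
        · exact Or.inl (Ex_of_witness hD hC ht hc hd hx0 h)
    · exact Or.inr ⟨t, ht, hc, hu, fun x hx => cond1' hC ht hc hu haT hx⟩
  · exact Or.inl ⟨t, ht, hc, hd, fun x hx => cond1' hC ht hc hd hu hx⟩

theorem key_P5 (hD : IsDRel D) (hC : IsSplitting D Set.univ C) {t : Set α} {b c d : α}
    (ht : t ∈ C) (hc : c ∈ t) (hd : d ∈ t) (H : ∀ x ∉ t, D c d b x) (u : α) :
    D u b c d ∨ Ex D C c u b := by
  by_cases hb : b ∈ t
  · by_cases hu : u ∈ t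
    · obtain ⟨x0, hx0⟩ := compl_ne hC ht
      have H0 : D c d b x0 := H x0 hx0
      rcases hD.d3 _ _ _ _ (swapP hD H0) u with h | h
      · rcases hD.d3 _ _ _ _ (swap1 hD h) b with h2 | hF2
        · exact Or.inl (swap1 hD h2)
        · rcases hD.d3 _ _ _ _ (swap1 hD (swapP hD H0)) u with h3 | h3
          · exact Or.inl h3
          · exact absurd h3 (excl2 hD hF2)
      · exact Or.inr (Ex_of_witness hD hC ht hc hu hx0 (swapP hD h))
    · exact Or.inl (swap1 hD (swapP hD (H u hu)))
  · by_cases hu : u ∈ t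
    · exact Or.inr ⟨t, ht, hc, hu, fun x hx => cond1' hC ht hc hu hb hx⟩
    · exact Or.inl (swapP hD (cond1' hC ht hc hd hu hb))

theorem key3 (hD : IsDRel D) (hC : IsSplitting D Set.univ C) {a b c d : α}
    (h : D a b c d) : Ex D C c d b ∨ Ex D C a b c := by
  obtain ⟨sa, hsa, ha⟩ := hC.cover a trivial
  by_cases hb : b ∈ sa
  · by_cases hc : c ∈ sa
    · by_cases hd : d ∈ sa
      · obtain ⟨x0, hx0⟩ := compl_ne hC hsa
        rcases hD.d3 _ _ _ _ h x0 with h1 | h1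
        · exact Or.inl (Ex_of_witness hD hC hsa hc hd hx0 (swap2 hD (swapP hD h1)))
        · exact Or.inr (Ex_of_witness hD hC hsa ha hb hx0 h1)
      · exact Or.inr (Ex_of_witness hD hC hsa ha hb hd h)
    · exact Or.inr ⟨sa, hsa, ha, hb, fun x hx => cond1' hC hsa ha hb hc hx⟩
  · obtain ⟨sc, hsc, hcc⟩ := hC.cover c trivial
    by_cases hd : d ∈ sc
    · by_cases hbc : b ∈ sc
      · have hac : a ∉ sc := fun h' => hb (by
          rw [sector_unique hC hsa hsc ha h']; exact hbc)
        exact Or.inl (Ex_of_witness hD hC hsc hcc hd hac (swap2 hD (swapP hD h)))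
      · exact Or.inl ⟨sc, hsc, hcc, hd, fun x hx => cond1' hC hsc hcc hd hbc hx⟩
    · exfalso
      by_cases hc : c ∈ sa
      · have hda : d ∉ sa := fun h' => hd (by
          rw [← sector_unique hC hsa hsc hc hcc]; exact h')
        exact excl1 hD h (cond1' hC hsa ha hc hb hda)
      · by_cases hda : d ∈ sa
        · exact excl2 hD h (swap2 hD (cond1' hC hsa ha hda hb hc))
        · obtain ⟨sb, hsb, hbb⟩ := hC.cover b trivial
          have hab : a ∉ sb := fun h' => hb (by
            rw [sector_unique hC hsa hsb ha h']; exact hbb)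
          by_cases hcb : c ∈ sb
          · have hdb : d ∉ sb := fun h' => hd (by
              rw [← sector_unique hC hsb hsc hcb hcc]; exact h')
            exact excl2 hD h (swap2 hD (swapP hD (cond1' hC hsb hbb hcb hab hdb)))
          · by_cases hdb : d ∈ sb
            · exact excl1 hD h (swapP hD (cond1' hC hsb hbb hdb hab hcb))
            · obtain ⟨sd, hsd, hdd⟩ := hC.cover d trivial
              have h1 : sa ≠ sb := fun e => hb (by rw [e]; exact hbb)
              have h2 : sa ≠ sc := fun e => hc (by rw [e]; exact hcc)
              have h3 : sa ≠ sd := fun e => hda (by rw [e]; exact hdd)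
              have h4 : sb ≠ sc := fun e => hcb (by rw [e]; exact hcc)
              have h5 : sb ≠ sd := fun e => hdb (by rw [e]; exact hdd)
              have h6 : sc ≠ sd := fun e => hd (by rw [e]; exact hdd)
              exact hC.cond2 sa hsa sb hsb sc hsc sd hsd h1 h2 h3 h4 h5 h6
                a ha b hbb c hcc d hdd h

/-- The extension of `D` to `Option α`, with `none` as the new point. -/
def DE (D : α → α → α → α → Prop) (C : Set (Set α)) :
    Option α → Option α → Option α → Option α → Prop
  | some a, some b, some c, some d => D a b c d
  | some a, some b, some c, none => Ex D C a b c
  | some a, some b, none, some c => Ex D C a b c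
  | some _, some _, none, none => True
  | some a, none, some c, some d => Ex D C c d a
  | none, some b, some c, some d => Ex D C c d b
  | none, none, some _, some _ => True
  | _, _, _, _ => False


theorem DE_isDRel (hD : IsDRel D) (hC : IsSplitting D Set.univ C) : IsDRel (DE D C) := by
  constructor
  · -- d1
    intro w x y z h
    rcases w with _ | a <;> rcases x with _ | b <;> rcases y with _ | c <;>
      rcases z with _ | d <;> simp only [DE] at h ⊢ <;>
      first
        | exact ⟨(hD.d1 _ _ _ _ h).1, (hD.d1 _ _ _ _ h).2⟩
        | exact ⟨Ex_sym hD h, h⟩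
        | exact ⟨h, h⟩
  · -- d2
    intro w x y z h
    rcases w with _ | a <;> rcases x with _ | b <;> rcases y with _ | c <;>
      rcases z with _ | d <;> simp only [DE] at h ⊢ <;>
      first
        | exact hD.d2 _ _ _ _ h
        | exact Ex_excl1 hD hC h
        | exact Ex_excl2 hD hC h
        | exact fun h' => Ex_excl1 hD hC h (Ex_sym hD h')
        | exact fun h' => Ex_excl2 hD hC h (Ex_sym hD h')
        | exact fun f => f
  · -- d3
    intro w x y z h v
    rcases w with _ | a <;> rcases x with _ | b <;> rcases y with _ | c <;>
      rcases z with _ | d <;> simp only [DE] at h <;> rcases v with _ | u <;>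
      simp only [DE] <;>
      first
        | exact Or.inl trivial
        | exact Or.inr trivial
        | exact Or.inl h
        | exact Or.inr h
        | exact hD.d3 _ _ _ _ h u
        | exact key3 hD hC h
        | (obtain ⟨s, hs, ha', hb', H⟩ := h; exact key_P1 hD hC hs ha' hb' H u)
        | (obtain ⟨s, hs, ha', hb', H⟩ := h; exact key_P2 hD hC hs ha' hb' H u)
        | (obtain ⟨s, hs, ha', hb', H⟩ := h; exact key_P4 hD hC hs ha' hb' H u)
        | (obtain ⟨s, hs, ha', hb', H⟩ := h; exact key_P5 hD hC hs ha' hb' H u)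
  · -- d4
    intro w x y z hwy hxy
    rcases w with _ | a <;> rcases x with _ | b <;> rcases y with _ | c
    · exact absurd rfl hwy
    · exact trivial
    · exact absurd rfl hwy
    · -- (none, some b, some c) : Ex c c b
      have hbc : b ≠ c := fun e => hxy (congrArg some e)
      obtain ⟨s, hs, hcs⟩ := hC.cover c trivial
      exact ⟨s, hs, hcs, hcs, fun x hx =>
        swapP hD (hD.d4 b x c c hbc (fun e => hx (by rw [e]; exact hcs)))⟩
    · exact absurd rfl hxy
    · -- (some a, none, some c) : Ex c c a
      have hac : a ≠ c := fun e => hwy (congrArg some e)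
      obtain ⟨s, hs, hcs⟩ := hC.cover c trivial
      exact ⟨s, hs, hcs, hcs, fun x hx =>
        swapP hD (hD.d4 a x c c hac (fun e => hx (by rw [e]; exact hcs)))⟩
    · exact trivial
    · exact hD.d4 a b c c (fun e => hwy (congrArg some e)) (fun e => hxy (congrArg some e))

end DSetExtAux

open DSetExtAux

/-- Extension of a finite D-set A by a new point e inducing a prescribed splitting C:
the D-relation extends to A ∪ {e} (modelled as Option α with e = none), satisfies
(D1)-(D4), obeys the stated characterization, and e induces C on A. -/
theorem dset_extension {α : Type*} [Finite α] {D : α → α → α → α → Prop}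
    (hD : IsDRel D) (h2 : ∃ x y : α, x ≠ y)
    (C : Set (Set α)) (hC : IsSplitting D Set.univ C) :
    ∃ D' : Option α → Option α → Option α → Option α → Prop,
      IsDRel D' ∧
      (∀ a b c d : α, D' (some a) (some b) (some c) (some d) ↔ D a b c d) ∧
      (∀ a b c : α, (¬ ∃ s ∈ C, a ∈ s ∧ b ∈ s) → ¬ D' (some a) (some b) (some c) none) ∧
      (∀ s ∈ C, ∀ a ∈ s, ∀ b ∈ s, ∀ c : α,
        (D' (some a) (some b) (some c) none ↔ ∃ x ∉ s, D a b c x) ∧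
        (D' (some a) (some b) (some c) none ↔ ∀ x ∉ s, D a b c x)) ∧
      (∀ s ∈ C, ∀ a ∈ s, ∀ b ∈ s, ∀ c ∉ s, D' (some a) (some b) (some c) none) := by
  refine ⟨DE D C, DE_isDRel hD hC, fun a b c d => Iff.rfl, ?_, ?_, ?_⟩
  · rintro a b c hno ⟨s, hs, ha, hb, -⟩
    exact hno ⟨s, hs, ha, hb⟩
  · intro s hs a ha b hb c
    have hall : DE D C (some a) (some b) (some c) none → ∀ x ∉ s, D a b c x := by
      rintro ⟨t, ht, hat, hbt, H⟩ x hx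
      have hts : t = s := sector_unique hC ht hs hat ha
      subst hts
      exact H x hx
    constructor
    · constructor
      · intro h
        obtain ⟨x0, hx0⟩ := compl_ne hC hs
        exact ⟨x0, hx0, hall h x0 hx0⟩
      · rintro ⟨x, hx, hDx⟩
        exact Ex_of_witness hD hC hs ha hb hx hDx
    · constructor
      · exact hall
      · intro H
        obtain ⟨x0, hx0⟩ := compl_ne hC hs
        exact Ex_of_witness hD hC hs ha hb hx0 (H x0 hx0)
  · intro s hs a ha b hb c hc
    exact ⟨s, hs, ha, hb, fun x hx => cond1' hC hs ha hb hc hx⟩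
end

section
/- No proper D-set is isomorphic to the set of leaves of a graph-theoretic tree with the path-disjointness D-relation. -/
/-!
Fix a leaf `c`. By (D5), for distinct leaves `a, b ≠ c` some leaf `w ≠ c` has its path to `c`
disjoint from the path `a – b`; so a vertex lying on every path from `c` to another leaf lies on
no path between two other leaves. In a tree this is impossible once there are two other leaves
`x, y`: walking from `c` towards `x`, the property "on every path from `c` to another leaf"
passes from a vertex `u` to the next vertex `v`, since a path from `c` leaving `u` away from `v`
would put `u` on a path from `x` to another leaf. So `x` itself has the property, yet `x` lies
on the path `x – y`.
-/

namespace SimpleGraph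

variable {V : Type*} {G : SimpleGraph V}

theorem IsAcyclic.isPath_reverse_append (hG : G.IsAcyclic) {u x z : V} {p : G.Walk u x}
    {q : G.Walk u z} (hp : p.IsPath) (hq : q.IsPath) (hsnd : p.snd ≠ q.snd) :
    (p.reverse.append q).IsPath := by
  cases p with
  | nil => simpa using hq
  | @cons _ v _ h p =>
    cases q with
    | nil => simpa using hp.reverse
    | cons h' q =>
      rw [hG.isPath_iff_isChain] at hp hq ⊢
      rw [Walk.edges_cons, List.isChain_cons] at hp
      simp_all [List.isChain_append, List.isChain_reverse, ne_comm, Sym2.eq_swap (a := v)]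

theorem Walk.mem_support_of_existsUnique_adj {u v w : V} (hu : ∃! s, G.Adj u s)
    (huv : G.Adj u v) (hwu : w ≠ u) (q : G.Walk w u) : v ∈ q.support := by
  have hpen : q.penultimate = v :=
    hu.unique (q.adj_penultimate (Walk.not_nil_of_ne hwu)).symm huv
  exact hpen ▸ q.getVert_mem_support _

variable (G) in
def OnAllPaths (c : V) (L : Set V) (u : V) : Prop :=
  ∀ ℓ ∈ L, ℓ ≠ c → ∀ q : G.Walk c ℓ, q.IsPath → u ∈ q.support

variable {c : V} {L : Set V}

theorem onAllPaths_self : G.OnAllPaths c L c :=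
  fun _ _ _ q _ => q.start_mem_support

theorem OnAllPaths.snd (hG : G.IsAcyclic) (hL : ∀ ℓ ∈ L, ∃! s, G.Adj ℓ s) {u x : V}
    (hu : G.OnAllPaths c L u) (p : G.Walk u x) (hp : p.IsPath)
    (hsep : ∀ z ∈ L, z ≠ c → z ≠ x → ∀ r : G.Walk x z, r.IsPath → u ∉ r.support) :
    G.OnAllPaths c L p.snd := by
  intro z hz hzc q hq
  have huq : u ∈ q.support := hu z hz hzc q hq
  by_cases huz : u = z
  · subst huz
    cases p with
    | nil => exact huq
    | cons h _ =>
      simpa using q.mem_support_of_existsUnique_adj (hL u hz) h (Ne.symm hzc)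
  classical
  set q' := q.dropUntil u huq
  by_cases hsnd : p.snd = q'.snd
  · exact q.support_dropUntil_subset_support huq (hsnd ▸ q'.getVert_mem_support 1)
  have hq' : q'.IsPath := hq.dropUntil huq
  have hzx : z ≠ x := by
    rintro rfl
    have hpq : (⟨p, hp⟩ : G.Path u z) = ⟨q', hq'⟩ := (hG.subsingleton_path u z).elim _ _
    exact hsnd (congrArg (·.1.snd) hpq)
  have hur : u ∈ (p.reverse.append q').support :=
    (Walk.mem_support_append_iff _ _).2 (Or.inl p.reverse.end_mem_support)
  exact absurd hur (hsep z hz hzc hzx _ (hG.isPath_reverse_append hp hq' hsnd))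

theorem OnAllPaths.of_isPath (hG : G.IsAcyclic) (hL : ∀ ℓ ∈ L, ∃! s, G.Adj ℓ s) {u x : V}
    (hu : G.OnAllPaths c L u) (p : G.Walk u x) (hp : p.IsPath)
    (hsep : ∀ w, G.OnAllPaths c L w →
      ∀ z ∈ L, z ≠ c → z ≠ x → ∀ r : G.Walk x z, r.IsPath → w ∉ r.support) :
    G.OnAllPaths c L x := by
  induction p with
  | nil => exact hu
  | cons h p ih =>
    have hv := hu.snd hG hL (.cons h p) hp (hsep _ hu)
    exact ih (by simpa using hv) hp.of_cons hsep

theorem IsTree.exists_onAllPaths_mem_support (hG : G.IsTree)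
    (hL : ∀ ℓ ∈ L, ∃! s, G.Adj ℓ s) {x y : V} (hx : x ∈ L) (hy : y ∈ L) (hxy : x ≠ y) (hxc : x ≠ c) (hyc : y ≠ c) :
    ∃ u, G.OnAllPaths c L u ∧ ∃ a ∈ L, ∃ b ∈ L, a ≠ b ∧ a ≠ c ∧ b ≠ c ∧
      ∃ r : G.Walk a b, r.IsPath ∧ u ∈ r.support := by
  by_contra! hsep
  obtain ⟨p, hp⟩ := (hG.connected c x).exists_isPath
  have hxL : G.OnAllPaths c L x :=
    onAllPaths_self.of_isPath hG.isAcyclic hL p hp fun w hw z hz hzc hzx =>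
      hsep w hw x hx z hz hzx.symm hxc hzc
  obtain ⟨r, hr⟩ := (hG.connected x y).exists_isPath
  exact hsep x hxL x hx y hy hxy hxc hyc r hr r.start_mem_support

end SimpleGraph

theorem proper_dset_not_tree_leaves_general {α : Type*} {D : α → α → α → α → Prop}
    (hcard : ∃ x y z : α, x ≠ y ∧ x ≠ z ∧ y ≠ z)
    (hproper : ∀ w x y : α, w ≠ x → w ≠ y → x ≠ y → ∃ z, z ≠ y ∧ D w x y z)
    {V : Type*} (G : SimpleGraph V) (hT : G.IsTree) :
    ¬ ∃ φ : α → V, Function.Injective φ ∧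
      (∀ v : V, (∃! u, G.Adj v u) ↔ ∃ a, φ a = v) ∧
      (∀ a b c d : α, D a b c d ↔
        ∀ (p : G.Walk (φ a) (φ b)) (q : G.Walk (φ c) (φ d)), p.IsPath → q.IsPath →
          ∀ v : V, v ∈ p.support → v ∉ q.support) := by
  rintro ⟨φ, hφ, hleaf, hD⟩
  obtain ⟨x, y, z, hxy, hxz, hyz⟩ := hcard
  obtain ⟨u, hu, _, ⟨a, rfl⟩, _, ⟨b, rfl⟩, hab, haz, hbz, r, hr, hur⟩ :=
    hT.exists_onAllPaths_mem_support (L := Set.range φ) (c := φ z)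
      (fun _ ⟨t, ht⟩ => (hleaf _).2 ⟨t, ht⟩) (Set.mem_range_self x) (Set.mem_range_self y)
      (hφ.ne hxy) (hφ.ne hxz) (hφ.ne hyz)
  obtain ⟨w, hwz, habzw⟩ := hproper a b z (ne_of_apply_ne φ hab) (ne_of_apply_ne φ haz)
    (ne_of_apply_ne φ hbz)
  obtain ⟨q, hq⟩ := (hT.connected (φ z) (φ w)).exists_isPath
  exact (hD a b z w).1 habzw r q hr hq u hur (hu _ (Set.mem_range_self w) (hφ.ne hwz) q hq)

/-- No proper D-set is isomorphic to the set of leaves of a graph-theoretic tree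
with the path-disjointness D-relation. -/
theorem proper_dset_not_tree_leaves {α : Type*} {D : α → α → α → α → Prop}
    (hD : IsDRel D)
    (hcard : ∃ x y z : α, x ≠ y ∧ x ≠ z ∧ y ≠ z)
    (hproper : ∀ w x y : α, w ≠ x → w ≠ y → x ≠ y → ∃ z, z ≠ y ∧ D w x y z)
    {V : Type*} (G : SimpleGraph V) (hT : G.IsTree) :
    ¬ ∃ φ : α → V, Function.Injective φ ∧
      (∀ v : V, (∃! u, G.Adj v u) ↔ ∃ a, φ a = v) ∧
      (∀ a b c d : α, D a b c d ↔
        ∀ (p : G.Walk (φ a) (φ b)) (q : G.Walk (φ c) (φ d)), p.IsPath → q.IsPath →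
          ∀ v : V, v ∈ p.support → v ∉ q.support) :=
  proper_dset_not_tree_leaves_general hcard hproper G hT
end

section
/- Let A ∪ {e} be a subset of a D-set with e ∉ A, and suppose e and e' both induce the same splitting C on A. Then e and e' satisfy exactly the same D-relations with triples from A; i.e., the map fixing A and sending e to e' is a partial isomorphism. -/
/-- e induces the splitting C on A. -/
def Induces {α : Type*} (D : α → α → α → α → Prop) (A : Set α) (e : α)
    (C : Set (Set α)) : Prop :=
  IsSplitting D A C ∧
  (∀ s ∈ C, ∀ a ∈ s, ∀ b ∈ s, ∀ c ∈ A \ s, D a b c e) ∧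
  (∀ s ∈ C, ∀ t ∈ C, s ≠ t → ∀ a ∈ s, ∀ b ∈ t, ∀ x ∈ A, ¬ D a b x e)

lemma same_splitting_key {α : Type*} {D : α → α → α → α → Prop}
    (hD : IsDRel D) (A : Set α) (e e' : α)
    (C : Set (Set α)) (hC : Induces D A e C) (hC' : Induces D A e' C) :
    ∀ a ∈ A, ∀ b ∈ A, ∀ c ∈ A, D a b c e → D a b c e' := by
  intro a ha b hb c hc h
  obtain ⟨hS, h1, h2⟩ := hC
  obtain ⟨hS', h1', h2'⟩ := hC'
  obtain ⟨sa, hsa, has⟩ := hS.cover a ha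
  obtain ⟨sb, hsb, hbs⟩ := hS.cover b hb
  by_cases hab : sa = sb
  · subst hab
    by_cases hcs : c ∈ sa
    · obtain ⟨t1, ht1, t2, ht2, hne⟩ := hS.two_sectors
      obtain ⟨t, ht, hts⟩ : ∃ t ∈ C, t ≠ sa := by
        by_cases h' : t1 = sa
        · exact ⟨t2, ht2, fun hh => hne (h'.trans hh.symm ▸ rfl)⟩
        · exact ⟨t1, ht1, h'⟩
      obtain ⟨d, hd⟩ := hS.sector_nonempty t ht
      rcases hD.d3 a b c e h e' with h' | h'
      · rcases hD.d3 e' b c e h' d with h'' | h''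
        · exact absurd h'' (h2 t ht sa hsa hts d hd b hbs c hc)
        · have hcd : D c d b e' := (hD.d1 _ _ _ _ ((hD.d1 _ _ _ _ h'').1)).2
          exact absurd hcd (h2' sa hsa t ht (Ne.symm hts) c hcs d hd b hb)
      · exact h'
    · exact h1' sa hsa a has b hbs c ⟨hc, hcs⟩
  · exact absurd h (h2 sa hsa sb hsb hab a has b hbs c hc)

/-- If e and e' induce the same splitting on A then they satisfy exactly the same
D-relations with triples from A. -/
theorem same_splitting_same_type {α : Type*} {D : α → α → α → α → Prop}
    (hD : IsDRel D) (A : Set α) (e e' : α) (he : e ∉ A) (he' : e' ∉ A)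
    (C : Set (Set α)) (hC : Induces D A e C) (hC' : Induces D A e' C) :
    ∀ a ∈ A, ∀ b ∈ A, ∀ c ∈ A,
      (D a b c e ↔ D a b c e') ∧ (D a b e c ↔ D a b e' c) ∧
      (D a e b c ↔ D a e' b c) ∧ (D e a b c ↔ D e' a b c) := by
  have flip : ∀ w x y z, D w x y z → D y z w x := fun w x y z h => (hD.d1 w x y z h).2
  have sw1 : ∀ w x y z, D w x y z → D x w y z := fun w x y z h => (hD.d1 w x y z h).1
  have key : ∀ a ∈ A, ∀ b ∈ A, ∀ c ∈ A, (D a b c e ↔ D a b c e') := fun a ha b hb c hc =>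
    ⟨same_splitting_key hD A e e' C hC hC' a ha b hb c hc,
     same_splitting_key hD A e' e C hC' hC a ha b hb c hc⟩
  intro a ha b hb c hc
  refine ⟨key a ha b hb c hc, ?_, ?_, ?_⟩
  · constructor
    · intro h
      exact flip _ _ _ _ (sw1 _ _ _ _ (flip _ _ _ _ ((key a ha b hb c hc).1
        (flip _ _ _ _ (sw1 _ _ _ _ (flip _ _ _ _ h))))))
    · intro h
      exact flip _ _ _ _ (sw1 _ _ _ _ (flip _ _ _ _ ((key a ha b hb c hc).2
        (flip _ _ _ _ (sw1 _ _ _ _ (flip _ _ _ _ h))))))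
  · constructor
    · intro h
      exact flip _ _ _ _ ((key b hb c hc a ha).1 (flip _ _ _ _ h))
    · intro h
      exact flip _ _ _ _ ((key b hb c hc a ha).2 (flip _ _ _ _ h))
  · constructor
    · intro h
      exact sw1 _ _ _ _ (flip _ _ _ _ ((key b hb c hc a ha).1 (flip _ _ _ _ (sw1 _ _ _ _ h))))
    · intro h
      exact sw1 _ _ _ _ (flip _ _ _ _ ((key b hb c hc a ha).2 (flip _ _ _ _ (sw1 _ _ _ _ h))))
end

section
/- Let Ω be a D-set. If (a_i)_{i∈I} is a sequence of distinct elements of Ω indexed by a linear order I with |I| ≥ 5 such that the truth value of D(a_i a_j; a_k a_ℓ) depends only on the order type of (i,j,k,ℓ), then either no nontrivial D-relation holds among distinct elements of the sequence, or D(a_i a_j; a_k a_ℓ) holds for all i < j < k < ℓ. -/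
/-- Two quadruples of indices have the same (quantifier-free) order type. -/
def SameOrderType {I : Type*} [LinearOrder I] (i j k l i' j' k' l' : I) : Prop :=
  (i < j ↔ i' < j') ∧ (i < k ↔ i' < k') ∧ (i < l ↔ i' < l') ∧
  (j < k ↔ j' < k') ∧ (j < l ↔ j' < l') ∧ (k < l ↔ k' < l') ∧
  (i = j ↔ i' = j') ∧ (i = k ↔ i' = k') ∧ (i = l ↔ i' = l') ∧
  (j = k ↔ j' = k') ∧ (j = l ↔ j' = l') ∧ (k = l ↔ k' = l')

lemma sotA {I : Type*} [LinearOrder I] {p q r s p' q' r' s' : I}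
    (h1 : p < q) (h2 : q < r) (h3 : r < s)
    (h1' : p' < q') (h2' : q' < r') (h3' : r' < s') :
    SameOrderType p q r s p' q' r' s' := by
  have hpr := h1.trans h2; have hqs := h2.trans h3; have hps := hpr.trans h3
  have hpr' := h1'.trans h2'; have hqs' := h2'.trans h3'; have hps' := hpr'.trans h3'
  exact ⟨iff_of_true h1 h1', iff_of_true hpr hpr', iff_of_true hps hps',
    iff_of_true h2 h2', iff_of_true hqs hqs', iff_of_true h3 h3',
    iff_of_false h1.ne h1'.ne, iff_of_false hpr.ne hpr'.ne, iff_of_false hps.ne hps'.ne,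
    iff_of_false h2.ne h2'.ne, iff_of_false hqs.ne hqs'.ne, iff_of_false h3.ne h3'.ne⟩

lemma sotB {I : Type*} [LinearOrder I] {p q r s p' q' r' s' : I}
    (h1 : p < q) (h2 : q < r) (h3 : r < s)
    (h1' : p' < q') (h2' : q' < r') (h3' : r' < s') :
    SameOrderType p r q s p' r' q' s' := by
  have hpr := h1.trans h2; have hqs := h2.trans h3; have hps := hpr.trans h3
  have hpr' := h1'.trans h2'; have hqs' := h2'.trans h3'; have hps' := hpr'.trans h3'
  exact ⟨iff_of_true hpr hpr', iff_of_true h1 h1', iff_of_true hps hps',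
    iff_of_false (lt_asymm h2) (lt_asymm h2'), iff_of_true h3 h3', iff_of_true hqs hqs',
    iff_of_false hpr.ne hpr'.ne, iff_of_false h1.ne h1'.ne, iff_of_false hps.ne hps'.ne,
    iff_of_false h2.ne' h2'.ne', iff_of_false h3.ne h3'.ne, iff_of_false hqs.ne hqs'.ne⟩

lemma sotC {I : Type*} [LinearOrder I] {p q r s p' q' r' s' : I}
    (h1 : p < q) (h2 : q < r) (h3 : r < s)
    (h1' : p' < q') (h2' : q' < r') (h3' : r' < s') :
    SameOrderType p s q r p' s' q' r' := by
  have hpr := h1.trans h2; have hqs := h2.trans h3; have hps := hpr.trans h3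
  have hpr' := h1'.trans h2'; have hqs' := h2'.trans h3'; have hps' := hpr'.trans h3'
  exact ⟨iff_of_true hps hps', iff_of_true h1 h1', iff_of_true hpr hpr',
    iff_of_false (lt_asymm hqs) (lt_asymm hqs'), iff_of_false (lt_asymm h3) (lt_asymm h3'),
    iff_of_true h2 h2',
    iff_of_false hps.ne hps'.ne, iff_of_false h1.ne h1'.ne, iff_of_false hpr.ne hpr'.ne,
    iff_of_false hqs.ne' hqs'.ne', iff_of_false h3.ne' h3'.ne', iff_of_false h2.ne h2'.ne⟩

/-- Classification of order-indiscernible sequences in a D-set: a sequence of distinct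
elements (at least 5 indices) whose D-relations depend only on order type is either
petaled (no nontrivial D-relation) or monotonic. -/
theorem indiscernible_petaled_or_monotonic {α : Type*} {D : α → α → α → α → Prop}
    (hD : IsDRel D) {I : Type*} [LinearOrder I] (a : I → α)
    (hinj : Function.Injective a)
    (h5 : ∃ i₁ i₂ i₃ i₄ i₅ : I, i₁ < i₂ ∧ i₂ < i₃ ∧ i₃ < i₄ ∧ i₄ < i₅)
    (hind : ∀ i j k l i' j' k' l' : I, SameOrderType i j k l i' j' k' l' →
      (D (a i) (a j) (a k) (a l) ↔ D (a i') (a j') (a k') (a l'))) :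
    (∀ i j k l : I, i ≠ j → i ≠ k → i ≠ l → j ≠ k → j ≠ l → k ≠ l →
      ¬ D (a i) (a j) (a k) (a l)) ∨
    (∀ i j k l : I, i < j → j < k → k < l → D (a i) (a j) (a k) (a l)) := by
  obtain ⟨i1, i2, i3, i4, i5, h12, h23, h34, h45⟩ := h5
  -- symmetry lemmas from (D1)
  have s12 : ∀ w x y z : α, D w x y z → D x w y z := fun w x y z h => (hD.d1 w x y z h).1
  have sP : ∀ w x y z : α, D w x y z → D y z w x := fun w x y z h => (hD.d1 w x y z h).2
  have s34 : ∀ w x y z : α, D w x y z → D w x z y :=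
    fun w x y z h => sP _ _ _ _ (s12 _ _ _ _ (sP _ _ _ _ h))
  -- uniformity of the three patterns
  have hA : ∀ p q r s : I, p < q → q < r → r < s →
      (D (a p) (a q) (a r) (a s) ↔ D (a i1) (a i2) (a i3) (a i4)) :=
    fun p q r s h1 h2 h3 => hind p q r s i1 i2 i3 i4 (sotA h1 h2 h3 h12 h23 h34)
  have hB : ∀ p q r s : I, p < q → q < r → r < s →
      (D (a p) (a r) (a q) (a s) ↔ D (a i1) (a i3) (a i2) (a i4)) :=
    fun p q r s h1 h2 h3 => hind p r q s i1 i3 i2 i4 (sotB h1 h2 h3 h12 h23 h34)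
  have hC : ∀ p q r s : I, p < q → q < r → r < s →
      (D (a p) (a s) (a q) (a r) ↔ D (a i1) (a i4) (a i2) (a i3)) :=
    fun p q r s h1 h2 h3 => hind p s q r i1 i4 i2 i3 (sotC h1 h2 h3 h12 h23 h34)
  -- pattern B is impossible
  have hnB : ¬ D (a i1) (a i3) (a i2) (a i4) := by
    intro hB'
    have nC : ¬ D (a i1) (a i4) (a i2) (a i3) := fun hC' =>
      hD.d2 (a i3) (a i1) (a i2) (a i4) (s12 _ _ _ _ hB') (s12 _ _ _ _ (sP _ _ _ _ hC'))
    have b1 : D (a i1) (a i4) (a i2) (a i5) :=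
      (hB i1 i2 i4 i5 h12 (h23.trans h34) h45).mpr hB'
    rcases hD.d3 _ _ _ _ b1 (a i3) with h | h
    · exact nC ((hC i2 i3 i4 i5 h23 h34 h45).mp (sP _ _ _ _ h))
    · exact nC ((hC i1 i2 i3 i4 h12 h23 h34).mp h)
  -- pattern C is impossible
  have hnC : ¬ D (a i1) (a i4) (a i2) (a i3) := by
    intro hC'
    have nA : ¬ D (a i1) (a i2) (a i3) (a i4) := fun hA' =>
      hD.d2 (a i1) (a i4) (a i2) (a i3) hC' (s34 _ _ _ _ hA')
    have c1 : D (a i5) (a i2) (a i4) (a i3) :=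
      s12 _ _ _ _ (s34 _ _ _ _ ((hC i2 i3 i4 i5 h23 h34 h45).mpr hC'))
    rcases hD.d3 _ _ _ _ c1 (a i1) with h | h
    · exact nA ((hA i1 i2 i3 i4 h12 h23 h34).mp (s34 _ _ _ _ h))
    · exact hnB ((hB i1 i2 i4 i5 h12 (h23.trans h34) h45).mp
        (sP _ _ _ _ (s34 _ _ _ _ (s12 _ _ _ _ h))))
  by_cases hA' : D (a i1) (a i2) (a i3) (a i4)
  · -- monotonic
    right
    intro i j k l h1 h2 h3
    exact (hA i j k l h1 h2 h3).mpr hA'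
  · -- petaled
    left
    have core : ∀ i j k l : I, i < j → k < l → i < k → j ≠ k → j ≠ l →
        ¬ D (a i) (a j) (a k) (a l) := by
      intro i j k l h1 h2 h3 hjk hjl hd
      rcases lt_trichotomy j k with h | h | h
      · exact hA' ((hA i j k l h1 h h2).mp hd)
      · exact hjk h
      · rcases lt_trichotomy j l with h' | h' | h'
        · exact hnB ((hB i k j l h3 h h').mp hd)
        · exact hjl h'
        · exact hnC ((hC i k l j h3 h2 h').mp hd)
    have core2 : ∀ i j k l : I, i < j → k < l → i ≠ k → j ≠ k → j ≠ l → i ≠ l →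
        ¬ D (a i) (a j) (a k) (a l) := by
      intro i j k l h1 h2 hik hjk hjl hil hd
      rcases hik.lt_or_gt with h | h
      · exact core i j k l h1 h2 h hjk hjl hd
      · exact core k l i j h2 h1 h hil.symm hjl.symm (sP _ _ _ _ hd)
    intro i j k l hij hik hil hjk hjl hkl hd
    rcases hij.lt_or_gt with h1 | h1 <;> rcases hkl.lt_or_gt with h2 | h2
    · exact core2 i j k l h1 h2 hik hjk hjl hil hd
    · exact core2 i j l k h1 h2 hil hjl hjk hik (s34 _ _ _ _ hd)
    · exact core2 j i k l h1 h2 hjk hik hil hjl (s12 _ _ _ _ hd)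
    · exact core2 j i l k h1 h2 hjl hil hik hjk (s34 _ _ _ _ (s12 _ _ _ _ hd))
end

section
/- In a D-set, a sequence (a_i)_{i∈I} of distinct elements indexed by a linear order, satisfying D(a_i a_j; a_k a_ℓ) whenever i < j < k < ℓ (a monotonic sequence), is order-indiscernible for quantifier-free formulas in the language {D}: the truth value of any D-relation on a 4-tuple of elements from the sequence depends only on the order type of the index tuple. -/
section Aux
variable {α : Type*} {D : α → α → α → α → Prop}

lemma DRel.perm8 (hD : IsDRel D) {w x y z : α} (h : D w x y z) :
    D w x y z ∧ D x w y z ∧ D w x z y ∧ D x w z y ∧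
    D y z w x ∧ D z y w x ∧ D y z x w ∧ D z y x w := by
  have s1 : ∀ a b c d : α, D a b c d → D b a c d := fun a b c d h => (hD.d1 a b c d h).1
  have s2 : ∀ a b c d : α, D a b c d → D c d a b := fun a b c d h => (hD.d1 a b c d h).2
  have s3 : ∀ a b c d : α, D a b c d → D a b d c :=
    fun a b c d h => s2 _ _ _ _ (s1 _ _ _ _ (s2 _ _ _ _ h))
  exact ⟨h, s1 _ _ _ _ h, s3 _ _ _ _ h, s1 _ _ _ _ (s3 _ _ _ _ h), s2 _ _ _ _ h,
    s1 _ _ _ _ (s2 _ _ _ _ h), s3 _ _ _ _ (s2 _ _ _ _ h),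
    s1 _ _ _ _ (s3 _ _ _ _ (s2 _ _ _ _ h))⟩

lemma DRel.neg8 (hD : IsDRel D) {w x y z : α} (hn : ¬ D w x y z) :
    ¬ D w x y z ∧ ¬ D x w y z ∧ ¬ D w x z y ∧ ¬ D x w z y ∧
    ¬ D y z w x ∧ ¬ D z y w x ∧ ¬ D y z x w ∧ ¬ D z y x w :=
  ⟨hn, fun h => hn (DRel.perm8 hD h).2.1, fun h => hn (DRel.perm8 hD h).2.2.1,
    fun h => hn (DRel.perm8 hD h).2.2.2.1, fun h => hn (DRel.perm8 hD h).2.2.2.2.1,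
    fun h => hn (DRel.perm8 hD h).2.2.2.2.2.2.1,
    fun h => hn (DRel.perm8 hD h).2.2.2.2.2.1,
    fun h => hn (DRel.perm8 hD h).2.2.2.2.2.2.2⟩

/-- which arrangements are true on an increasing quadruple -/
def DGood (p q : Fin 4) : Prop :=
  (p = 0 ∧ q = 1) ∨ (p = 1 ∧ q = 0) ∨ (p = 2 ∧ q = 3) ∨ (p = 3 ∧ q = 2)

lemma DRel.side {I : Type*} [LinearOrder I] (hD : IsDRel D) (a : I → α)
    (hmono : ∀ i j k l : I, i < j → j < k → k < l → D (a i) (a j) (a k) (a l))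
    (v : Fin 4 → I) (hv : StrictMono v) (p q r s : Fin 4)
    (hpq : p ≠ q) (hpr : p ≠ r) (hps : p ≠ s) (hqr : q ≠ r) (hqs : q ≠ s) (hrs : r ≠ s) :
    (D (a (v p)) (a (v q)) (a (v r)) (a (v s)) ↔ DGood p q) := by
  simp only [DGood]
  have hT : D (a (v 0)) (a (v 1)) (a (v 2)) (a (v 3)) :=
    hmono _ _ _ _ (hv (by decide)) (hv (by decide)) (hv (by decide))
  obtain ⟨p1, p2, p3, p4, p5, p6, p7, p8⟩ := DRel.perm8 hD hT
  have n1 : ¬ D (a (v 0)) (a (v 2)) (a (v 1)) (a (v 3)) := hD.d2 _ _ _ _ hT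
  have n2 : ¬ D (a (v 0)) (a (v 3)) (a (v 1)) (a (v 2)) := hD.d2 _ _ _ _ p3
  obtain ⟨m1, m2, m3, m4, m5, m6, m7, m8⟩ := DRel.neg8 hD n1
  obtain ⟨k1, k2, k3, k4, k5, k6, k7, k8⟩ := DRel.neg8 hD n2
  fin_cases p <;> fin_cases q <;> fin_cases r <;> fin_cases s <;>
    first
      | exact absurd rfl hpq | exact absurd rfl hpr | exact absurd rfl hps
      | exact absurd rfl hqr | exact absurd rfl hqs | exact absurd rfl hrs
      | exact iff_of_true (by assumption) (by decide)
      | exact iff_of_false (by assumption) (by decide)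

end Aux

/-- A monotonic sequence of distinct elements in a D-set is quantifier-free
order-indiscernible: for any two increasing quadruples of indices and any
permutation σ of {0,1,2,3}, the corresponding D-relations agree. -/
theorem monotonic_is_indiscernible {α : Type*} {D : α → α → α → α → Prop}
    (hD : IsDRel D) {I : Type*} [LinearOrder I] (a : I → α)
    (hinj : Function.Injective a)
    (hmono : ∀ i j k l : I, i < j → j < k → k < l → D (a i) (a j) (a k) (a l))
    (u w : Fin 4 → I) (hu : StrictMono u) (hw : StrictMono w)
    (σ : Equiv.Perm (Fin 4)) :
    D (a (u (σ 0))) (a (u (σ 1))) (a (u (σ 2))) (a (u (σ 3))) ↔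
    D (a (w (σ 0))) (a (w (σ 1))) (a (w (σ 2))) (a (w (σ 3))) := by
  have hne : ∀ i j : Fin 4, i ≠ j → σ i ≠ σ j := fun i j h hc => h (σ.injective hc)
  rw [DRel.side hD a hmono u hu _ _ _ _ (hne _ _ (by decide)) (hne _ _ (by decide))
      (hne _ _ (by decide)) (hne _ _ (by decide)) (hne _ _ (by decide)) (hne _ _ (by decide)),
    DRel.side hD a hmono w hw _ _ _ _ (hne _ _ (by decide)) (hne _ _ (by decide))
      (hne _ _ (by decide)) (hne _ _ (by decide)) (hne _ _ (by decide)) (hne _ _ (by decide))]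
end

section
/- Let Ω be a D-set and let (a_i)_{i∈I} be a sequence (|I| ≥ 5, indexed by a linear order) of distinct elements such that the truth of D-relations among them depends only on the order type of indices. Then the pattern 'D(a_i a_k; a_j a_ℓ) for all i < j < k < ℓ' is impossible, and the pattern 'D(a_i a_ℓ; a_j a_k) for all i < j < k < ℓ' is impossible. -/
/-- In an order-indiscernible sequence of distinct elements of a D-set (at least 5
indices), the patterns D(a_i a_k; a_j a_l) for all i<j<k<l, and D(a_i a_l; a_j a_k)
for all i<j<k<l, are both impossible. -/
theorem impossible_indiscernible_patterns {α : Type*} {D : α → α → α → α → Prop}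
    (hD : IsDRel D) {I : Type*} [LinearOrder I] (a : I → α)
    (hinj : Function.Injective a)
    (h5 : ∃ i₁ i₂ i₃ i₄ i₅ : I, i₁ < i₂ ∧ i₂ < i₃ ∧ i₃ < i₄ ∧ i₄ < i₅)
    (hind : ∀ i j k l i' j' k' l' : I, SameOrderType i j k l i' j' k' l' →
      (D (a i) (a j) (a k) (a l) ↔ D (a i') (a j') (a k') (a l'))) :
    (¬ ∀ i j k l : I, i < j → j < k → k < l → D (a i) (a k) (a j) (a l)) ∧
    (¬ ∀ i j k l : I, i < j → j < k → k < l → D (a i) (a l) (a j) (a k)) := by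
  obtain ⟨i₁, i₂, i₃, i₄, i₅, h12, h23, h34, h45⟩ := h5
  have swap1 : ∀ w x y z : α, D w x y z → D x w y z := fun w x y z h => (hD.d1 w x y z h).1
  have swapP : ∀ w x y z : α, D w x y z → D y z w x := fun w x y z h => (hD.d1 w x y z h).2
  have swap2 : ∀ w x y z : α, D w x y z → D w x z y := by
    intro w x y z h
    exact swapP _ _ _ _ (swap1 _ _ _ _ (swapP _ _ _ _ h))
  constructor
  · intro hpat
    have h1 : D (a i₁) (a i₄) (a i₂) (a i₅) := hpat i₁ i₂ i₄ i₅ h12 (h23.trans h34) h45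
    rcases hD.d3 _ _ _ _ h1 (a i₃) with hA | hB
    · have h2 : D (a i₂) (a i₄) (a i₃) (a i₅) := hpat i₂ i₃ i₄ i₅ h23 h34 h45
      exact hD.d2 _ _ _ _ (swap1 _ _ _ _ hA) (swap1 _ _ _ _ h2)
    · have h2 : D (a i₁) (a i₃) (a i₂) (a i₄) := hpat i₁ i₂ i₃ i₄ h12 h23 h34
      exact hD.d2 _ _ _ _ (swap2 _ _ _ _ hB) (swap2 _ _ _ _ h2)
  · intro hpat
    have h1 : D (a i₁) (a i₄) (a i₂) (a i₃) := hpat i₁ i₂ i₃ i₄ h12 h23 h34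
    rcases hD.d3 _ _ _ _ h1 (a i₅) with hA | hB
    · have h2 : D (a i₂) (a i₅) (a i₃) (a i₄) := hpat i₂ i₃ i₄ i₅ h23 h34 h45
      exact hD.d2 _ _ _ _ hA (swap2 _ _ _ _ (swap1 _ _ _ _ h2))
    · have h2 : D (a i₁) (a i₅) (a i₂) (a i₄) := hpat i₁ i₂ i₄ i₅ h12 (h23.trans h34) h45
      exact hD.d2 _ _ _ _ (swap2 _ _ _ _ h2) (swap2 _ _ _ _ hB)
end

section
/- Let {C₁, C₂} be an edge splitting (splitting into exactly two sectors) of a D-set Ω. Then {C₁, C₂} is a true edge splitting if and only if for all a,b ∈ C₁ and c,d ∈ C₂ there exist y₁ ∈ C₁ and y₂ ∈ C₂ such that each y_m (m = 1,2) satisfies D(y_m b; cd), D(a y_m; cd), D(ab; y_m d), and D(ab; c y_m). -/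
section DCalc

variable {α : Type*} {D : α → α → α → α → Prop} (hD : IsDRel D)
include hD

theorem dp21 {w x y z : α} (h : D w x y z) : D x w y z := (hD.d1 w x y z h).1

theorem dpss {w x y z : α} (h : D w x y z) : D y z w x := (hD.d1 w x y z h).2

theorem dp34 {w x y z : α} (h : D w x y z) : D w x z y := dpss hD (dp21 hD (dpss hD h))

theorem dex2 {w x y z : α} (h : D w x y z) : ¬ D w y x z := hD.d2 w x y z h

theorem dex3 {w x y z : α} (h : D w x y z) : ¬ D w z y x :=
  fun h' => hD.d2 w x z y (dp34 hD h) (dp34 hD h')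

theorem dne13 {w x y z : α} (h : D w x y z) : w ≠ y := by
  rintro rfl; exact hD.d2 x w w z (dp21 hD h) (dp21 hD h)

theorem dne14 {w x y z : α} (h : D w x y z) : w ≠ z := dne13 hD (dp34 hD h)

theorem dne23 {w x y z : α} (h : D w x y z) : x ≠ y := dne13 hD (dp21 hD h)

theorem dne24 {w x y z : α} (h : D w x y z) : x ≠ z := dne14 hD (dp21 hD h)

theorem dself {w x y : α} (h1 : y ≠ w) (h2 : y ≠ x) : D y y w x :=
  dpss hD (hD.d4 w x y y h1.symm h2.symm)

theorem dtrans {u v w s t : α} (h1 : D u v s t) (h2 : D v w s t) : D u w s t := by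
  rcases hD.d3 s t u v (dpss hD h1) w with h | h
  · rcases hD.d3 s t w v (dpss hD (dp21 hD h2)) u with h' | h'
    · exact absurd h' (dex3 hD (dpss hD h))
    · exact dp21 hD (dpss hD h')
  · exact dpss hD h

theorem dabsorb {z y A B C : α} (h1 : D z y A B) (h2 : D y A B C) : D z A B C := by
  rcases hD.d3 B C y A (dpss hD h2) z with h | h
  · have h3 : D C B y A := dp21 hD (dpss hD h2)
    have h4 : D z B y A := dtrans hD h h3
    exact absurd (dp34 hD h4) (dex3 hD h1)
  · exact dtrans hD (dp21 hD (dpss hD h)) h2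

theorem dabsorb2 {z y A B C : α} (h1 : D z y A C) (h2 : D y A B C) : D z A B C := by
  rcases hD.d3 B C y A (dpss hD h2) z with h | h
  · exact absurd (dp34 hD h) (dex3 hD h1)
  · exact dtrans hD (dp21 hD (dpss hD h)) h2

theorem dkey1 {y z A B C : α} (hy : D y A B C) (hz : D z A B C) : D y z B C := by
  rcases hD.d3 B C y A (dpss hD hy) z with h | h
  · rcases hD.d3 y A z C (dpss hD h) B with h' | h'
    · exact absurd (dpss hD h') (dex3 hD hz)
    · rcases hD.d3 B C z A (dpss hD hz) y with h'' | h''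
      · rcases hD.d3 z A y C (dpss hD h'') B with h3 | h3
        · exact absurd (dpss hD h3) (dex3 hD hy)
        · exact absurd (dpss hD h3) (dex3 hD h')
      · exact dp21 hD (dpss hD h'')
  · exact dpss hD h

theorem dconv {u v A B C : α} (hnA : ¬ D u A B C) (hnB : ¬ D u B A C) (h : D u v B C) :
    D u v A B := by
  rcases hD.d3 B C u v (dpss hD h) A with h1 | h1
  · rcases hD.d3 C A u v (dp21 hD h1) B with h2 | h2
    · exact dpss hD (dp21 hD h2)
    · exact absurd (dp34 hD (dpss hD h2)) hnB
  · exact absurd (dpss hD h1) hnA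

theorem dN2 {y x E F G : α} (h : D y F E x) (hx : ¬ D x E F G) : D y F E G := by
  rcases hD.d3 y F E x h G with h1 | h1
  · exact absurd (dp34 hD (dp21 hD (dpss hD h1))) hx
  · exact h1

theorem dN3 {y u v A B C : α} (h : D y A u v) (h1 : ¬ D u v A B) (h2 : ¬ D u B A C) :
    D y A B C := by
  rcases hD.d3 y A u v h B with h3 | h3
  · exact absurd (dp34 hD (dpss hD h3)) h1
  · rcases hD.d3 y A B u (dp34 hD h3) C with h4 | h4
    · exact absurd (dp34 hD (dp21 hD (dpss hD h4))) h2
    · exact h4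

theorem dNA {w x y E F G : α} (hw : D w E F G) (hx : ¬ D x E F G) (h : D y E w x) :
    D y E F G :=
  dN3 hD h (fun hc => hx (dp34 hD (dabsorb2 hD (dp21 hD hc) (dp34 hD hw)))) (dex2 hD hw)

theorem dM12 {w x y z E F G : α} (hw : D w E F G) (hx : ¬ D x E F G) (h : D w x y z) :
    D y z F G ∨ D y z E F ∨ D y z E G := by
  rcases hD.d3 w x y z h E with hα | hβ
  · rcases hD.d3 x E y z (dp21 hD hα) F with h1 | h1
    · exact Or.inr (Or.inl (dp34 hD (dpss hD h1)))
    · have hy' : D y F E x := dp34 hD (dpss hD h1)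
      have hyF : D y F E G := dN2 hD hy' hx
      have hz' : D z F E x := dp21 hD (dtrans hD (dp21 hD hy') (dpss hD hα))
      have hzF : D z F E G := dN2 hD hz' hx
      exact Or.inr (Or.inr (dkey1 hD hyF hzF))
  · have hy' : D y E w x := dpss hD hβ
    have hyE : D y E F G := dNA hD hw hx hy'
    have hz' : D z E w x := dp21 hD (dtrans hD (dp21 hD hy') (dpss hD h))
    have hzE : D z E F G := dNA hD hw hx hz'
    exact Or.inl (dkey1 hD hyE hzE)

theorem dM3 {w x y z A B C : α} (hnw : ¬ D w B A C) (hnx : ¬ D x A B C)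
    (hwx : ¬ D w x A B) (h : D w x y z) :
    D y z B C ∨ D y z A B ∨ D y z A C := by
  rcases hD.d3 w x y z h A with hα | hβ
  · rcases hD.d3 x A y z (dp21 hD hα) B with h1 | h1
    · exact Or.inr (Or.inl (dpss hD (dp21 hD h1)))
    · have hy' : D y B A x := dp34 hD (dpss hD h1)
      have hyB : D y B A C := dN2 hD hy' hnx
      have hz' : D z B A x := dp21 hD (dtrans hD (dp21 hD hy') (dpss hD hα))
      have hzB : D z B A C := dN2 hD hz' hnx
      exact Or.inr (Or.inr (dkey1 hD hyB hzB))
  · have hy' : D y A w x := dpss hD hβ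
    have hyA : D y A B C := dN3 hD hy' hwx hnw
    have hz' : D z A w x := dp21 hD (dtrans hD (dp21 hD hy') (dpss hD h))
    have hzA : D z A B C := dN3 hD hz' hwx hnw
    exact Or.inl (dkey1 hD hyA hzA)

theorem dcond1br {y z p q E F G : α} (hy : D y E F G) (hz : D z E F G)
    (hp : ¬ D p E F G) (hq : ¬ D q E F G) : D y z p q := by
  have h1 : D y z F G := dkey1 hD hy hz
  have step : ∀ r, ¬ D r E F G → D r G y z := by
    intro r hr
    rcases hD.d3 F G y z (dpss hD h1) r with h2 | h2
    · exact h2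
    · exact absurd (dtrans hD (dp21 hD (dpss hD h2)) hy) hr
  exact dpss hD (dtrans hD (step p hp) (dp21 hD (step q hq)))

end DCalc

theorem exists_witness {α : Type*} {D : α → α → α → α → Prop} (hD : IsDRel D)
    (C₁ C₂ : Set α) (hne : C₁ ≠ C₂) (hsplit : IsSplitting D Set.univ {C₁, C₂})
    (hns1 : ¬ ∃ x, C₁ = {x})
    (hnoP : ¬ ∃ P, IsSplitting D Set.univ P ∧ 3 ≤ P.encard ∧ ∀ s ∈ P, s ⊆ C₁ ∨ s ⊆ C₂)
    {a b c d : α} (ha : a ∈ C₁) (hb : b ∈ C₁) (hc : c ∈ C₂) (hd : d ∈ C₂) :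
    ∃ y ∈ C₁, D y b c d ∧ D a y c d ∧ D a b y d ∧ D a b c y := by
  have hC₁P : C₁ ∈ ({C₁, C₂} : Set (Set α)) := Set.mem_insert _ _
  have hC₂P : C₂ ∈ ({C₁, C₂} : Set (Set α)) := Set.mem_insert_of_mem _ rfl
  have hnd : ∀ x, x ∈ C₁ → x ∈ C₂ → False := fun x h1 h2 =>
    Set.disjoint_left.mp (hsplit.pairwise_disjoint C₁ hC₁P C₂ hC₂P hne) h1 h2
  have hcov : ∀ x : α, x ∈ C₁ ∨ x ∈ C₂ := by
    intro x
    obtain ⟨s, hs, hxs⟩ := hsplit.cover x trivial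
    rcases hs with rfl | hs
    · exact Or.inl hxs
    · rw [Set.mem_singleton_iff] at hs; subst hs; exact Or.inr hxs
  have G1 : ∀ y ∈ C₁, ∀ y' ∈ C₁, ∀ u ∈ C₂, ∀ v ∈ C₂, D y y' u v := by
    intro y hy y' hy' u hu v hv
    exact hsplit.cond1 C₁ hC₁P y hy y' hy' u ⟨trivial, fun h => hnd u h hu⟩
      v ⟨trivial, fun h => hnd v h hv⟩
  have G2 : ∀ u ∈ C₂, ∀ v ∈ C₂, ∀ y ∈ C₁, ∀ y' ∈ C₁, D u v y y' := by
    intro u hu v hv y hy y' hy'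
    exact hsplit.cond1 C₂ hC₂P u hu v hv y ⟨trivial, fun h => hnd y hy h⟩
      y' ⟨trivial, fun h => hnd y' hy' h⟩
  have had : a ≠ d := fun e => hnd a ha (e ▸ hd)
  have hbd : b ≠ d := fun e => hnd b hb (e ▸ hd)
  have hac : a ≠ c := fun e => hnd a ha (e ▸ hc)
  have hbc : b ≠ c := fun e => hnd b hb (e ▸ hc)
  by_cases hab : a = b
  · subst hab
    have hy : ∃ y ∈ C₁, y ≠ a := by
      by_contra h'
      push_neg at h'
      exact hns1 ⟨a, Set.eq_singleton_iff_unique_mem.mpr ⟨ha, h'⟩⟩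
    obtain ⟨y, hy, hya⟩ := hy
    exact ⟨y, hy, G1 y hy a ha c hc d hd, G1 a ha y hy c hc d hd,
      dpss hD (hD.d4 y d a a hya had.symm),
      dpss hD (hD.d4 c y a a hac.symm hya)⟩
  · by_contra hno
    have hfail : ∀ y ∈ C₁, ¬ D a b y d := by
      intro y hy hDy
      have h4 : D a b c y := by
        rcases hD.d3 a b y d hDy c with h | h
        · exact absurd (dp21 hD h) (dex2 hD (G1 b hb y hy c hc d hd))
        · exact dp34 hD h
      exact hno ⟨y, hy, G1 y hy b hb c hc d hd, G1 a ha y hy c hc d hd, hDy, h4⟩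
    have hox : ∀ u ∈ C₁, ¬ D u d a b := fun u hu h' => hfail u hu (dpss hD h')
    set BA : Set α := {u | D u a b d} with hBAdef
    set BB : Set α := {u | D u b a d} with hBBdef
    set R : Set α := {u | u ∈ C₁ ∧ ¬ D u a b d ∧ ¬ D u b a d} with hRdef
    set SS : α → Set α := fun t => {u | u ∈ R ∧ D t u a b} with hSSdef
    set P : Set (Set α) := insert BA (insert BB (insert C₂ (SS '' R))) with hPdef
    have haBA : a ∈ BA := dpss hD (hD.d4 b d a a (Ne.symm hab) had.symm)
    have hbBB : b ∈ BB := dpss hD (hD.d4 a d b b hab hbd.symm)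
    have hBA1 : BA ⊆ C₁ := by
      intro u hu
      refine (hcov u).resolve_right (fun hu2 => ?_)
      exact dex3 hD hu (dp34 hD (G2 u hu2 d hd a ha b hb))
    have hBB1 : BB ⊆ C₁ := by
      intro u hu
      refine (hcov u).resolve_right (fun hu2 => ?_)
      exact dex3 hD hu (G2 u hu2 d hd a ha b hb)
    have hR1 : R ⊆ C₁ := fun u hu => hu.1
    have hA2 : ∀ u, u ∈ BA → u ∈ C₂ → False := fun u h1 h2 => hnd u (hBA1 h1) h2
    have hB2 : ∀ u, u ∈ BB → u ∈ C₂ → False := fun u h1 h2 => hnd u (hBB1 h1) h2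
    have hAB : ∀ u, u ∈ BA → u ∈ BB → False := fun u h1 h2 => dex2 hD h1 h2
    have hSmem : ∀ t u, u ∈ SS t → u ∈ R ∧ D t u a b := fun t u h => h
    have haBA' : D a a b d := haBA
    have hbBB' : D b b a d := hbBB
    have hta : ∀ t, t ∈ R → t ≠ a := fun t ht e => ht.2.1 (by rw [e]; exact haBA')
    have htb : ∀ t, t ∈ R → t ≠ b := fun t ht e => ht.2.2 (by rw [e]; exact hbBB')
    have hself : ∀ t, t ∈ R → t ∈ SS t := fun t ht =>
      ⟨ht, dself hD (hta t ht) (htb t ht)⟩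
    have hclass_eq : ∀ t, t ∈ R → ∀ t', t' ∈ R → D t t' a b → SS t = SS t' := by
      intro t ht t' ht' htt'
      ext u
      constructor
      · rintro ⟨hu, hq⟩; exact ⟨hu, dtrans hD (dp21 hD htt') hq⟩
      · rintro ⟨hu, hq⟩; exact ⟨hu, dtrans hD htt' hq⟩
    have hmem : ∀ s ∈ P, s = BA ∨ s = BB ∨ s = C₂ ∨ ∃ t ∈ R, s = SS t := by
      intro s hs
      rcases hs with rfl | rfl | rfl | ⟨t, ht, rfl⟩
      · exact Or.inl rfl
      · exact Or.inr (Or.inl rfl)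
      · exact Or.inr (Or.inr (Or.inl rfl))
      · exact Or.inr (Or.inr (Or.inr ⟨t, ht, rfl⟩))
    have killA : ∀ v t, t ∈ P → t ≠ BA → v ∈ t → D v a b d → False := by
      intro v t htP htne hvt hv
      rcases hmem t htP with rfl | rfl | rfl | ⟨t₁, ht₁, rfl⟩
      · exact htne rfl
      · exact dex2 hD hv hvt
      · exact hA2 v hv hvt
      · exact hvt.1.2.1 hv
    have killB : ∀ v t, t ∈ P → t ≠ BB → v ∈ t → D v b a d → False := by
      intro v t htP htne hvt hv
      rcases hmem t htP with rfl | rfl | rfl | ⟨t₁, ht₁, rfl⟩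
      · exact dex2 hD hv hvt
      · exact htne rfl
      · exact hB2 v hv hvt
      · exact hvt.1.2.2 hv
    have kill2 : ∀ v t, t ∈ P → t ≠ C₂ → v ∈ t → D v d a b → False := by
      intro v t htP htne hvt hv
      rcases hmem t htP with rfl | rfl | rfl | ⟨t₁, ht₁, rfl⟩
      · exact hox v (hBA1 hvt) hv
      · exact hox v (hBB1 hvt) hv
      · exact htne rfl
      · exact hox v (hR1 hvt.1) hv
    have samepair : ∀ s ∈ P, ∀ t ∈ P, s ≠ t → ∀ u ∈ s, ∀ v ∈ t,
        ¬ (D u v a b ∨ D u v a d ∨ D u v b d) := by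
      intro s hsP t htP hst u hus v hvt hor
      rcases hmem s hsP with rfl | rfl | rfl | ⟨t₀, ht₀, rfl⟩
      · have hv : D v a b d := by
          rcases hor with h | h | h
          · exact dabsorb hD (dp21 hD h) hus
          · exact dabsorb2 hD (dp21 hD h) hus
          · exact dtrans hD (dp21 hD h) hus
        exact killA v t htP (Ne.symm hst) hvt hv
      · have hv : D v b a d := by
          rcases hor with h | h | h
          · exact dabsorb hD (dp34 hD (dp21 hD h)) hus
          · exact dtrans hD (dp21 hD h) hus
          · exact dabsorb2 hD (dp21 hD h) hus
        exact killB v t htP (Ne.symm hst) hvt hv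
      · have hu2 : D u d a b := G2 u hus d hd a ha b hb
        have hv : D v d a b := by
          rcases hor with h | h | h
          · exact dtrans hD (dp21 hD h) hu2
          · exact dp34 hD (dabsorb2 hD (dp34 hD (dp21 hD h)) (dp34 hD hu2))
          · exact dp34 hD (dabsorb hD (dp34 hD (dp21 hD h)) (dp34 hD hu2))
        exact kill2 v t htP (Ne.symm hst) hvt hv
      · have huR : u ∈ R := hus.1
        have huv : D u v a b := by
          rcases hor with h | h | h
          · exact h
          · exact dp34 hD (dconv hD huR.2.2 huR.2.1 h)
          · exact dconv hD huR.2.1 huR.2.2 h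
        rcases hmem t htP with rfl | rfl | rfl | ⟨t₁, ht₁, rfl⟩
        · exact huR.2.1 (dabsorb hD huv hvt)
        · exact huR.2.2 (dabsorb hD (dp34 hD huv) hvt)
        · exact hox u (hR1 huR) (dtrans hD huv (G2 v hvt d hd a ha b hb))
        · refine hst ?_
          have h1 : D t₀ v a b := dtrans hD hus.2 huv
          exact hclass_eq t₀ ht₀ t₁ ht₁ (dtrans hD h1 (dp21 hD hvt.2))
    have inclass : ∀ t₀ ∈ R, ∀ u ∈ SS t₀, ∀ p, D u p a b → p ∈ SS t₀ := by
      intro t₀ ht₀ u hu p hup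
      rcases hcov p with hp1 | hp2
      · by_cases hpa : D p a b d
        · exact absurd (dabsorb hD hup hpa) hu.1.2.1
        · by_cases hpb : D p b a d
          · exact absurd (dabsorb hD (dp34 hD hup) hpb) hu.1.2.2
          · exact ⟨⟨hp1, hpa, hpb⟩, dtrans hD hu.2 hup⟩
      · exact absurd (dtrans hD hup (G2 p hp2 d hd a ha b hb)) (hox u (hR1 hu.1))
    have hsplitP : IsSplitting D Set.univ P := by
      refine ⟨?_, ?_, ?_, ?_, ?_, ?_, ?_⟩
      · intro s hs
        rcases hmem s hs with rfl | rfl | rfl | ⟨t, ht, rfl⟩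
        · exact ⟨a, haBA⟩
        · exact ⟨b, hbBB⟩
        · exact ⟨d, hd⟩
        · exact ⟨t, hself t ht⟩
      · exact fun s _ => Set.subset_univ s
      · intro x _
        rcases hcov x with hx1 | hx2
        · by_cases hxa : D x a b d
          · exact ⟨BA, Set.mem_insert _ _, hxa⟩
          · by_cases hxb : D x b a d
            · exact ⟨BB, Set.mem_insert_of_mem _ (Set.mem_insert _ _), hxb⟩
            · have hxR : x ∈ R := ⟨hx1, hxa, hxb⟩
              exact ⟨SS x, Set.mem_insert_of_mem _ (Set.mem_insert_of_mem _
                (Set.mem_insert_of_mem _ ⟨x, hxR, rfl⟩)), hself x hxR⟩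
        · exact ⟨C₂, Set.mem_insert_of_mem _ (Set.mem_insert_of_mem _
            (Set.mem_insert _ _)), hx2⟩
      · intro s hs t ht hst
        refine Set.disjoint_left.mpr ?_
        intro u hus hut
        rcases hmem s hs with rfl | rfl | rfl | ⟨t₀, ht₀, rfl⟩
        · exact killA u t ht (Ne.symm hst) hut hus
        · exact killB u t ht (Ne.symm hst) hut hus
        · exact kill2 u t ht (Ne.symm hst) hut (G2 u hus d hd a ha b hb)
        · rcases hmem t ht with rfl | rfl | rfl | ⟨t₁, ht₁, rfl⟩
          · exact hus.1.2.1 hut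
          · exact hus.1.2.2 hut
          · exact hnd u (hR1 hus.1) hut
          · exact hst (hclass_eq t₀ ht₀ t₁ ht₁ (dtrans hD hus.2 (dp21 hD hut.2)))
      · exact ⟨BA, Set.mem_insert _ _, BB, Set.mem_insert_of_mem _ (Set.mem_insert _ _),
          fun e => hAB a haBA (e ▸ haBA)⟩
      · intro s hs y' hy' z' hz' p hp q hq
        rcases hmem s hs with rfl | rfl | rfl | ⟨t₀, ht₀, rfl⟩
        · exact dcond1br hD hy' hz' hp.2 hq.2
        · exact dcond1br hD hy' hz' hp.2 hq.2
        · exact G2 y' hy' z' hz' p ((hcov p).resolve_right hp.2)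
            q ((hcov q).resolve_right hq.2)
        · have hyz : D y' z' a b := dtrans hD (dp21 hD hy'.2) hz'.2
          have step : ∀ r, r ∉ SS t₀ → D r b y' z' := by
            intro r hr
            rcases hD.d3 a b y' z' (dpss hD hyz) r with h | h
            · exact h
            · exact absurd (inclass t₀ ht₀ y' hy' r (dpss hD h)) hr
          exact dpss hD (dtrans hD (step p hp.2) (dp21 hD (step q hq.2)))
      · intro s₁ hs₁ s₂ hs₂ s₃ hs₃ s₄ hs₄ h12 h13 h14 h23 h24 h34 w hw x hx y hy z hz
        intro hDw
        have hSB : D y z a b ∨ D y z a d ∨ D y z b d := by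
          rcases hmem s₁ hs₁ with rfl | rfl | rfl | ⟨t₀, ht₀, rfl⟩ <;>
            rcases hmem s₂ hs₂ with rfl | rfl | rfl | ⟨t₁, ht₁, rfl⟩
          · exact absurd rfl h12
          · rcases dM12 hD hw (dex2 hD hx) hDw with h | h | h
            · exact Or.inr (Or.inr h)
            · exact Or.inl h
            · exact Or.inr (Or.inl h)
          · have hx2 : D x d a b := G2 x hx d hd a ha b hb
            rcases dM12 hD hw (fun hc => dex2 hD hx2 (dp34 hD hc)) hDw with h | h | h
            · exact Or.inr (Or.inr h)
            · exact Or.inl h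
            · exact Or.inr (Or.inl h)
          · rcases dM12 hD hw hx.1.2.1 hDw with h | h | h
            · exact Or.inr (Or.inr h)
            · exact Or.inl h
            · exact Or.inr (Or.inl h)
          · rcases dM12 hD hw (dex2 hD hx) hDw with h | h | h
            · exact Or.inr (Or.inl h)
            · exact Or.inl (dp34 hD h)
            · exact Or.inr (Or.inr h)
          · exact absurd rfl h12
          · have hx2 : D x d a b := G2 x hx d hd a ha b hb
            rcases dM12 hD hw (dex3 hD hx2) hDw with h | h | h
            · exact Or.inr (Or.inl h)
            · exact Or.inl (dp34 hD h)
            · exact Or.inr (Or.inr h)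
          · rcases dM12 hD hw hx.1.2.2 hDw with h | h | h
            · exact Or.inr (Or.inl h)
            · exact Or.inl (dp34 hD h)
            · exact Or.inr (Or.inr h)
          · have hw2 : D w d a b := G2 w hw d hd a ha b hb
            rcases dM12 hD hw2 (fun hc => dex3 hD hx (dp34 hD hc)) hDw with h | h | h
            · exact Or.inl h
            · exact Or.inr (Or.inl (dp34 hD h))
            · exact Or.inr (Or.inr (dp34 hD h))
          · have hw2 : D w d a b := G2 w hw d hd a ha b hb
            rcases dM12 hD hw2 (dex3 hD hx) hDw with h | h | h
            · exact Or.inl h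
            · exact Or.inr (Or.inl (dp34 hD h))
            · exact Or.inr (Or.inr (dp34 hD h))
          · exact absurd rfl h12
          · have hw2 : D w d a b := G2 w hw d hd a ha b hb
            rcases dM12 hD hw2 (hox x (hR1 hx.1)) hDw with h | h | h
            · exact Or.inl h
            · exact Or.inr (Or.inl (dp34 hD h))
            · exact Or.inr (Or.inr (dp34 hD h))
          · rcases dM12 hD hx hw.1.2.1 (dp21 hD hDw) with h | h | h
            · exact Or.inr (Or.inr h)
            · exact Or.inl h
            · exact Or.inr (Or.inl h)
          · rcases dM12 hD hx hw.1.2.2 (dp21 hD hDw) with h | h | h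
            · exact Or.inr (Or.inl h)
            · exact Or.inl (dp34 hD h)
            · exact Or.inr (Or.inr h)
          · have hx2 : D x d a b := G2 x hx d hd a ha b hb
            rcases dM12 hD hx2 (hox w (hR1 hw.1)) (dp21 hD hDw) with h | h | h
            · exact Or.inl h
            · exact Or.inr (Or.inl (dp34 hD h))
            · exact Or.inr (Or.inr (dp34 hD h))
          · have hwx : ¬ D w x a b := fun hc => h12 (hclass_eq t₀ ht₀ t₁ ht₁
              (dtrans hD (dtrans hD hw.2 hc) (dp21 hD hx.2)))
            rcases dM3 hD hw.1.2.2 hx.1.2.1 hwx hDw with h | h | h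
            · exact Or.inr (Or.inr h)
            · exact Or.inl h
            · exact Or.inr (Or.inl h)
        exact samepair s₃ hs₃ s₄ hs₄ h34 y hy z hz hSB
    have hsub3 : ({BA, BB, C₂} : Set (Set α)) ⊆ P := by
      intro s hs
      rcases hs with rfl | rfl | rfl
      · exact Set.mem_insert _ _
      · exact Set.mem_insert_of_mem _ (Set.mem_insert _ _)
      · exact Set.mem_insert_of_mem _ (Set.mem_insert_of_mem _ (Set.mem_insert _ _))
    have nAB : BA ≠ BB := fun e => hAB a haBA (e ▸ haBA)
    have nA2 : BA ≠ C₂ := fun e => hnd a ha (e ▸ haBA)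
    have nB2 : BB ≠ C₂ := fun e => hnd b hb (e ▸ hbBB)
    have hcard : 3 ≤ P.encard := by
      have h1 : ({BA, BB, C₂} : Set (Set α)).encard = 3 := by
        rw [Set.encard_insert_of_notMem (by simp [nAB, nA2]), Set.encard_pair nB2]
        rfl
      calc (3 : ℕ∞) = ({BA, BB, C₂} : Set (Set α)).encard := h1.symm
        _ ≤ P.encard := Set.encard_mono hsub3
    have href : ∀ s ∈ P, s ⊆ C₁ ∨ s ⊆ C₂ := by
      intro s hs
      rcases hmem s hs with rfl | rfl | rfl | ⟨t, ht, rfl⟩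
      · exact Or.inl hBA1
      · exact Or.inl hBB1
      · exact Or.inr (subset_refl _)
      · exact Or.inl (fun u hu => hR1 hu.1)
    exact hnoP ⟨P, hsplitP, hcard, href⟩

/-- Characterization of true edge splittings: an edge splitting {C₁, C₂} is a true edge
splitting iff every configuration a,b ∈ C₁, c,d ∈ C₂ has witnesses of density in both
sectors. -/
theorem true_edge_splitting_iff {α : Type*} {D : α → α → α → α → Prop}
    (hD : IsDRel D) (C₁ C₂ : Set α) (hne : C₁ ≠ C₂)
    (hsplit : IsSplitting D Set.univ {C₁, C₂}) :
    ((¬ ∃ x, C₁ = {x}) ∧ (¬ ∃ x, C₂ = {x}) ∧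
      ¬ ∃ P, IsSplitting D Set.univ P ∧ 3 ≤ P.encard ∧ ∀ s ∈ P, s ⊆ C₁ ∨ s ⊆ C₂)
    ↔ ∀ a ∈ C₁, ∀ b ∈ C₁, ∀ c ∈ C₂, ∀ d ∈ C₂,
        (∃ y₁ ∈ C₁, D y₁ b c d ∧ D a y₁ c d ∧ D a b y₁ d ∧ D a b c y₁) ∧
        (∃ y₂ ∈ C₂, D y₂ b c d ∧ D a y₂ c d ∧ D a b y₂ d ∧ D a b c y₂) := by
  have hC₁P : C₁ ∈ ({C₁, C₂} : Set (Set α)) := Set.mem_insert _ _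
  have hC₂P : C₂ ∈ ({C₁, C₂} : Set (Set α)) := Set.mem_insert_of_mem _ rfl
  have hnd : ∀ x, x ∈ C₁ → x ∈ C₂ → False := fun x h1 h2 =>
    Set.disjoint_left.mp (hsplit.pairwise_disjoint C₁ hC₁P C₂ hC₂P hne) h1 h2
  have hcov : ∀ x : α, x ∈ C₁ ∨ x ∈ C₂ := by
    intro x
    obtain ⟨s, hs, hxs⟩ := hsplit.cover x trivial
    rcases hs with rfl | hs
    · exact Or.inl hxs
    · rw [Set.mem_singleton_iff] at hs; subst hs; exact Or.inr hxs
  have hC1ne : C₁.Nonempty := hsplit.sector_nonempty C₁ hC₁P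
  have hC2ne : C₂.Nonempty := hsplit.sector_nonempty C₂ hC₂P
  constructor
  · rintro ⟨hns1, hns2, hnoP⟩ a ha b hb c hc d hd
    refine ⟨exists_witness hD C₁ C₂ hne hsplit hns1 hnoP ha hb hc hd, ?_⟩
    have hsplit' : IsSplitting D Set.univ {C₂, C₁} := by
      rw [Set.pair_comm C₂ C₁]; exact hsplit
    have hnoP' : ¬ ∃ P, IsSplitting D Set.univ P ∧ 3 ≤ P.encard ∧
        ∀ s ∈ P, s ⊆ C₂ ∨ s ⊆ C₁ := by
      rintro ⟨P, h1, h2, h3⟩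
      exact hnoP ⟨P, h1, h2, fun s hs => (h3 s hs).symm⟩
    obtain ⟨y, hy, k1, k2, k3, k4⟩ :=
      exists_witness hD C₂ C₁ hne.symm hsplit' hns2 hnoP' hc hd ha hb
    exact ⟨y, hy, dpss hD k3, dpss hD k4, dpss hD k1, dpss hD k2⟩
  · intro hdens
    refine ⟨?_, ?_, ?_⟩
    · rintro ⟨x, hx1⟩
      obtain ⟨c, hc⟩ := hC2ne
      have hx : x ∈ C₁ := by rw [hx1]; rfl
      obtain ⟨⟨y₁, hy₁, _, _, h3, _⟩, _⟩ := hdens x hx x hx c hc c hc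
      have : y₁ = x := by rw [hx1] at hy₁; exact hy₁
      subst this
      exact dne13 hD h3 rfl
    · rintro ⟨x, hx2⟩
      obtain ⟨a, ha⟩ := hC1ne
      have hx : x ∈ C₂ := by rw [hx2]; rfl
      obtain ⟨_, ⟨y₂, hy₂, h1, _, _, _⟩⟩ := hdens a ha a ha x hx x hx
      have : y₂ = x := by rw [hx2] at hy₂; exact hy₂
      subst this
      exact dne13 hD h1 rfl
    · rintro ⟨P, hP, hcard, href⟩
      obtain ⟨a, ha⟩ := hC1ne
      obtain ⟨c, hc⟩ := hC2ne
      obtain ⟨s, hsP, has⟩ := hP.cover a trivial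
      obtain ⟨t, htP, hct⟩ := hP.cover c trivial
      have hsC1 : s ⊆ C₁ := by
        rcases href s hsP with h | h
        · exact h
        · exact absurd (h has) (fun h2 => hnd a ha h2)
      have htC2 : t ⊆ C₂ := by
        rcases href t htP with h | h
        · exact absurd (h hct) (fun h2 => hnd c h2 hc)
        · exact h
      have hst : s ≠ t := fun e => hnd a ha (htC2 (e ▸ has))
      have hthird : ∃ u ∈ P, u ∉ ({s, t} : Set (Set α)) := by
        by_contra h'
        push_neg at h'
        have hsub : P ⊆ ({s, t} : Set (Set α)) := fun u hu => h' u hu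
        have h2 : P.encard ≤ ({s, t} : Set (Set α)).encard := Set.encard_mono hsub
        have h3 : ({s, t} : Set (Set α)).encard ≤ 2 := by
          calc ({s, t} : Set (Set α)).encard ≤ ({t} : Set (Set α)).encard + 1 :=
              Set.encard_insert_le _ _
            _ = 2 := by rw [Set.encard_singleton]; rfl
        have := hcard.trans (h2.trans h3)
        norm_num at this
      obtain ⟨u, huP, hust⟩ := hthird
      have hus : u ≠ s := fun e => hust (by rw [e]; exact Set.mem_insert _ _)
      have hut : u ≠ t := fun e => hust (by rw [e]; exact Set.mem_insert_of_mem _ rfl)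
      -- helper: a sector containing a C₁ point is ⊆ C₁, etc.
      have hsecC1 : ∀ v ∈ P, ∀ x ∈ v, x ∈ C₁ → v ⊆ C₁ := by
        intro v hv x hxv hx1
        rcases href v hv with h | h
        · exact h
        · exact absurd (h hxv) (fun h2 => hnd x hx1 h2)
      have hsecC2 : ∀ v ∈ P, ∀ x ∈ v, x ∈ C₂ → v ⊆ C₂ := by
        intro v hv x hxv hx2
        rcases href v hv with h | h
        · exact absurd (h hxv) (fun h2 => hnd x h2 hx2)
        · exact h
      have hne12 : ∀ v ∈ P, ∀ v' ∈ P, v ⊆ C₁ → v' ⊆ C₂ → v ≠ v' := by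
        intro v hv v' hv' h1 h2 e
        obtain ⟨x, hx⟩ := hP.sector_nonempty v hv
        exact hnd x (h1 hx) (h2 (e ▸ hx))
      rcases href u huP with huC1 | huC2
      · -- two sectors s, u inside C₁
        obtain ⟨b, hbu⟩ := hP.sector_nonempty u huP
        have hb1 : b ∈ C₁ := huC1 hbu
        obtain ⟨⟨y₁, hy₁, _, _, k3, k4⟩, _⟩ := hdens a ha b hb1 c hc c hc
        obtain ⟨v, hvP, hyv⟩ := hP.cover y₁ trivial
        have hvC1 : v ⊆ C₁ := hsecC1 v hvP y₁ hyv hy₁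
        have htv : v ≠ t := hne12 v hvP t htP hvC1 htC2
        by_cases hvs : v = s
        · subst hvs
          have : D a y₁ b c := hP.cond1 v hvP a has y₁ hyv
            b ⟨trivial, fun h2 => Set.disjoint_left.mp
              (hP.pairwise_disjoint u huP v hvP (hus)) hbu h2⟩
            c ⟨trivial, fun h2 => hnd c (hvC1 h2) hc⟩
          exact dex2 hD this k3
        · by_cases hvu : v = u
          · subst hvu
            have : D b y₁ a c := hP.cond1 v hvP b hbu y₁ hyv
              a ⟨trivial, fun h2 => Set.disjoint_left.mp
                (hP.pairwise_disjoint s hsP v hvP (Ne.symm hus)) has h2⟩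
              c ⟨trivial, fun h2 => hnd c (hvC1 h2) hc⟩
            exact dex2 hD this (dp34 hD (dp21 hD k4))
          · exact hP.cond2 s hsP u huP v hvP t htP (Ne.symm hus) (Ne.symm hvs) hst
              (Ne.symm hvu) hut htv a has b hbu y₁ hyv c hct k3
      · -- two sectors t, u inside C₂
        obtain ⟨d, hdu⟩ := hP.sector_nonempty u huP
        have hd2 : d ∈ C₂ := huC2 hdu
        obtain ⟨_, ⟨y₂, hy₂, k1, k2, _, _⟩⟩ := hdens a ha a ha c hc d hd2
        obtain ⟨v, hvP, hyv⟩ := hP.cover y₂ trivial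
        have hvC2 : v ⊆ C₂ := hsecC2 v hvP y₂ hyv hy₂
        have hsv : s ≠ v := hne12 s hsP v hvP hsC1 hvC2
        by_cases hvt : v = t
        · subst hvt
          have : D y₂ c a d := hP.cond1 v hvP y₂ hyv c hct
            a ⟨trivial, fun h2 => hnd a ha (hvC2 h2)⟩
            d ⟨trivial, fun h2 => Set.disjoint_left.mp
              (hP.pairwise_disjoint u huP v hvP hut) hdu h2⟩
          exact dex2 hD this (dp21 hD k2)
        · by_cases hvu : v = u
          · subst hvu
            have : D y₂ d a c := hP.cond1 v hvP y₂ hyv d hdu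
              a ⟨trivial, fun h2 => hnd a ha (hvC2 h2)⟩
              c ⟨trivial, fun h2 => Set.disjoint_left.mp
                (hP.pairwise_disjoint t htP v hvP (Ne.symm hut)) hct h2⟩
            exact dex2 hD this (dp34 hD (dp21 hD k2))
          · exact hP.cond2 s hsP v hvP t htP u huP hsv
              (hne12 s hsP t htP hsC1 htC2) (hne12 s hsP u huP hsC1 huC2)
              hvt hvu (Ne.symm hut) a has y₂ hyv c hct d hdu k2
end
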